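/- arXiv:0805.3437 — 4 statements merged into one kernel-verified Lean document; each statement's English description precedes it below -/
import Mathlib

section
/- Let α, β, γ ∈ Aut_Hopf(H), let M be an (α,β)-Yetter-Drinfeld module and N a (β,γ)-Yetter-Drinfeld module. Then M ⊗ N, endowed with the left H-action h·(m⊗n) = h₁·m ⊗ h₂·n and the right H-coaction m⊗n ↦ (m₍₀₎ ⊗ n₍₀₎) ⊗ n₍₁₎m₍₁₎ (structures 'of type one'), is an (α,γ)-Yetter-Drinfeld module. -/
open TensorProduct

noncomputable section

namespace GYD

variable (k H : Type) [Field k] [Ring H] [HopfAlgebra k H]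

/-- `φ` is a Hopf algebra automorphism of `H` (a linear equivalence which is both an
algebra morphism and a coalgebra morphism). -/
def IsHopfAut (φ : H ≃ₗ[k] H) : Prop :=
  (∀ x y : H, φ (x * y) = φ x * φ y) ∧ (φ 1 = 1) ∧
  (∀ h : H, Coalgebra.comul (R := k) (φ h)
      = TensorProduct.map φ.toLinearMap φ.toLinearMap (Coalgebra.comul (R := k) h)) ∧
  (∀ h : H, Coalgebra.counit (R := k) (φ h) = Coalgebra.counit (R := k) h)

/-- `Sinv` is a two-sided inverse of the antipode of `H`. -/
def IsAntipodeInv (Sinv : H → H) : Prop :=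
  (∀ h : H, HopfAlgebra.antipode (R := k) (Sinv h) = h) ∧
  (∀ h : H, Sinv (HopfAlgebra.antipode (R := k) h) = h)

/-- The data `(act, coact)` makes `M` an `(α, β)`-Yetter-Drinfeld module over `H`:
`M` is a left `H`-module, a right `H`-comodule, and the compatibility
`(h·m)₍₀₎ ⊗ (h·m)₍₁₎ = h₂·m₍₀₎ ⊗ β(h₃) m₍₁₎ α(Sinv(h₁))` holds (expressed via
arbitrary finite representations of `(Δ ⊗ id)(Δ h)` and of `coact m`). -/
def IsYD (Sinv α β : H → H) {M : Type} [AddCommGroup M] [Module k M]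
    (act : H →ₗ[k] M →ₗ[k] M) (coact : M →ₗ[k] M ⊗[k] H) : Prop :=
  (∀ m : M, act 1 m = m) ∧
  (∀ (g h : H) (m : M), act (g * h) m = act g (act h m)) ∧
  (∀ m : M, LinearMap.rTensor H coact (coact m)
      = (TensorProduct.assoc k M H H).symm
          (LinearMap.lTensor M (Coalgebra.comul (R := k)) (coact m))) ∧
  (∀ m : M,
    TensorProduct.rid k M (LinearMap.lTensor M (Coalgebra.counit (R := k)) (coact m)) = m) ∧
  (∀ (h : H) (m : M) (s t : Finset ℕ) (a b c : ℕ → H) (m₀ : ℕ → M) (m₁ : ℕ → H),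
    LinearMap.rTensor H (Coalgebra.comul (R := k)) (Coalgebra.comul (R := k) h)
        = ∑ i ∈ s, (a i ⊗ₜ[k] b i) ⊗ₜ[k] c i →
    coact m = ∑ j ∈ t, m₀ j ⊗ₜ[k] m₁ j →
    coact (act h m) = ∑ i ∈ s, ∑ j ∈ t,
      act (b i) (m₀ j) ⊗ₜ[k] (β (c i) * m₁ j * α (Sinv (a i))))

/-- Characterization of the action `h · (m ⊗ n) = θ₁(h₁)·m ⊗ θ₂(h₂)·n` on `M ⊗ N`. -/
def TensorActChar (θ₁ θ₂ : H → H) {M N : Type} [AddCommGroup M] [Module k M]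
    [AddCommGroup N] [Module k N]
    (actM : H →ₗ[k] M →ₗ[k] M) (actN : H →ₗ[k] N →ₗ[k] N)
    (act : H →ₗ[k] (M ⊗[k] N) →ₗ[k] (M ⊗[k] N)) : Prop :=
  ∀ (h : H) (m : M) (n : N) (s : Finset ℕ) (p q : ℕ → H),
    Coalgebra.comul (R := k) h = ∑ i ∈ s, p i ⊗ₜ[k] q i →
    act h (m ⊗ₜ[k] n) = ∑ i ∈ s, actM (θ₁ (p i)) m ⊗ₜ[k] actN (θ₂ (q i)) n

/-- Characterization of the "type two" action `h · (m ⊗ n) = h₂·m ⊗ h₁·n` on `M ⊗ N`. -/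
def TensorActCharTwo {M N : Type} [AddCommGroup M] [Module k M]
    [AddCommGroup N] [Module k N]
    (actM : H →ₗ[k] M →ₗ[k] M) (actN : H →ₗ[k] N →ₗ[k] N)
    (act : H →ₗ[k] (M ⊗[k] N) →ₗ[k] (M ⊗[k] N)) : Prop :=
  ∀ (h : H) (m : M) (n : N) (s : Finset ℕ) (p q : ℕ → H),
    Coalgebra.comul (R := k) h = ∑ i ∈ s, p i ⊗ₜ[k] q i →
    act h (m ⊗ₜ[k] n) = ∑ i ∈ s, actM (q i) m ⊗ₜ[k] actN (p i) n

/-- Characterization of the coaction `m ⊗ n ↦ (m₍₀₎ ⊗ n₍₀₎) ⊗ n₍₁₎ m₍₁₎` on `M ⊗ N`. -/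
def TensorCoactChar {M N : Type} [AddCommGroup M] [Module k M]
    [AddCommGroup N] [Module k N]
    (coactM : M →ₗ[k] M ⊗[k] H) (coactN : N →ₗ[k] N ⊗[k] H)
    (coact : M ⊗[k] N →ₗ[k] (M ⊗[k] N) ⊗[k] H) : Prop :=
  ∀ (m : M) (n : N) (s t : Finset ℕ) (m₀ : ℕ → M) (m₁ : ℕ → H) (n₀ : ℕ → N) (n₁ : ℕ → H),
    coactM m = ∑ i ∈ s, m₀ i ⊗ₜ[k] m₁ i →
    coactN n = ∑ j ∈ t, n₀ j ⊗ₜ[k] n₁ j →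
    coact (m ⊗ₜ[k] n) = ∑ i ∈ s, ∑ j ∈ t, (m₀ i ⊗ₜ[k] n₀ j) ⊗ₜ[k] (n₁ j * m₁ i)

/-- Characterization of the "type two" coaction `m ⊗ n ↦ (m₍₀₎ ⊗ n₍₀₎) ⊗ m₍₁₎ n₍₁₎`. -/
def TensorCoactCharTwo {M N : Type} [AddCommGroup M] [Module k M]
    [AddCommGroup N] [Module k N]
    (coactM : M →ₗ[k] M ⊗[k] H) (coactN : N →ₗ[k] N ⊗[k] H)
    (coact : M ⊗[k] N →ₗ[k] (M ⊗[k] N) ⊗[k] H) : Prop :=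
  ∀ (m : M) (n : N) (s t : Finset ℕ) (m₀ : ℕ → M) (m₁ : ℕ → H) (n₀ : ℕ → N) (n₁ : ℕ → H),
    coactM m = ∑ i ∈ s, m₀ i ⊗ₜ[k] m₁ i →
    coactN n = ∑ j ∈ t, n₀ j ⊗ₜ[k] n₁ j →
    coact (m ⊗ₜ[k] n) = ∑ i ∈ s, ∑ j ∈ t, (m₀ i ⊗ₜ[k] n₀ j) ⊗ₜ[k] (m₁ i * n₁ j)

/-- Characterization of the action `(h · f)(m) = f (θ(h) · m)` on the dual space. -/
def DualActChar (θ : H → H) {M : Type} [AddCommGroup M] [Module k M]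
    (actM : H →ₗ[k] M →ₗ[k] M)
    (actD : H →ₗ[k] Module.Dual k M →ₗ[k] Module.Dual k M) : Prop :=
  ∀ (h : H) (f : Module.Dual k M) (m : M), actD h f m = f (actM (θ h) m)

/-- Characterization of the coaction `f₍₀₎(m) ⊗ f₍₁₎ = f(m₍₀₎) ⊗ σ(m₍₁₎)` on the dual space
(expressed through contraction against evaluation at each `m`). -/
def DualCoactChar (σ : H → H) {M : Type} [AddCommGroup M] [Module k M]
    (coactM : M →ₗ[k] M ⊗[k] H)
    (coactD : Module.Dual k M →ₗ[k] Module.Dual k M ⊗[k] H) : Prop :=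
  ∀ (f : Module.Dual k M) (m : M) (t : Finset ℕ) (m₀ : ℕ → M) (m₁ : ℕ → H),
    coactM m = ∑ j ∈ t, m₀ j ⊗ₜ[k] m₁ j →
    TensorProduct.lid k H (LinearMap.rTensor H (Module.Dual.eval k M m) (coactD f))
      = ∑ j ∈ t, f (m₀ j) • σ (m₁ j)

/-- Characterization of the action `(h · u)(m) = θ(h₁) · u (θ(S(h₂)) · m)` on `End(M)`. -/
def EndActChar (θ : H → H) {M : Type} [AddCommGroup M] [Module k M]
    (actM : H →ₗ[k] M →ₗ[k] M)
    (actE : H →ₗ[k] Module.End k M →ₗ[k] Module.End k M) : Prop :=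
  ∀ (h : H) (u : Module.End k M) (m : M) (s : Finset ℕ) (p q : ℕ → H),
    Coalgebra.comul (R := k) h = ∑ i ∈ s, p i ⊗ₜ[k] q i →
    actE h u m = ∑ i ∈ s,
      actM (θ (p i)) (u (actM (θ (HopfAlgebra.antipode (R := k) (q i))) m))

/-- Characterization of the coaction `u₍₀₎(m) ⊗ u₍₁₎ = u(m₍₀₎)₍₀₎ ⊗ Sinv(m₍₁₎) u(m₍₀₎)₍₁₎`
on `End(M)`, expressed through contraction against evaluation at each `m`. -/
def EndCoactChar (Sinv : H → H) {M : Type} [AddCommGroup M] [Module k M]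
    (coactM : M →ₗ[k] M ⊗[k] H)
    (coactE : Module.End k M →ₗ[k] Module.End k M ⊗[k] H) : Prop :=
  ∀ (u : Module.End k M) (m : M) (t : Finset ℕ) (m₀ : ℕ → M) (m₁ : ℕ → H)
    (r : ℕ → Finset ℕ) (n₀ : ℕ → ℕ → M) (n₁ : ℕ → ℕ → H),
    coactM m = ∑ j ∈ t, m₀ j ⊗ₜ[k] m₁ j →
    (∀ j ∈ t, coactM (u (m₀ j)) = ∑ l ∈ r j, n₀ j l ⊗ₜ[k] n₁ j l) →
    LinearMap.rTensor H (LinearMap.applyₗ (R := k) m) (coactE u)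
      = ∑ j ∈ t, ∑ l ∈ r j, n₀ j l ⊗ₜ[k] (Sinv (m₁ j) * n₁ j l)

/-- Characterization of the action `(h · u)(m) = θ(h₂) · u (θ(Sinv(h₁)) · m)` on `End(M)ᵒᵖ`. -/
def EndOpActChar (θ Sinv : H → H) {M : Type} [AddCommGroup M] [Module k M]
    (actM : H →ₗ[k] M →ₗ[k] M)
    (actE : H →ₗ[k] (Module.End k M)ᵐᵒᵖ →ₗ[k] (Module.End k M)ᵐᵒᵖ) : Prop :=
  ∀ (h : H) (u : (Module.End k M)ᵐᵒᵖ) (m : M) (s : Finset ℕ) (p q : ℕ → H),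
    Coalgebra.comul (R := k) h = ∑ i ∈ s, p i ⊗ₜ[k] q i →
    (actE h u).unop m = ∑ i ∈ s,
      actM (θ (q i)) (u.unop (actM (θ (Sinv (p i))) m))

/-- Characterization of the coaction `u₍₀₎(m) ⊗ u₍₁₎ = u(m₍₀₎)₍₀₎ ⊗ u(m₍₀₎)₍₁₎ S(m₍₁₎)`
on `End(M)ᵒᵖ`, expressed through contraction against evaluation at each `m`. -/
def EndOpCoactChar {M : Type} [AddCommGroup M] [Module k M]
    (coactM : M →ₗ[k] M ⊗[k] H)
    (coactE : (Module.End k M)ᵐᵒᵖ →ₗ[k] (Module.End k M)ᵐᵒᵖ ⊗[k] H) : Prop :=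
  ∀ (u : (Module.End k M)ᵐᵒᵖ) (m : M) (t : Finset ℕ) (m₀ : ℕ → M) (m₁ : ℕ → H)
    (r : ℕ → Finset ℕ) (n₀ : ℕ → ℕ → M) (n₁ : ℕ → ℕ → H),
    coactM m = ∑ j ∈ t, m₀ j ⊗ₜ[k] m₁ j →
    (∀ j ∈ t, coactM (u.unop (m₀ j)) = ∑ l ∈ r j, n₀ j l ⊗ₜ[k] n₁ j l) →
    LinearMap.rTensor H ((LinearMap.applyₗ (R := k) m).comp
        (MulOpposite.opLinearEquiv k).symm.toLinearMap) (coactE u)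
      = ∑ j ∈ t, ∑ l ∈ r j,
          n₀ j l ⊗ₜ[k] (n₁ j l * HopfAlgebra.antipode (R := k) (m₁ j))

/-- `A`, with the Yetter-Drinfeld structure `(act, coact)`, is an algebra in the braided
category of Yetter-Drinfeld modules over `H`. -/
def IsYDAlgebra (Sinv : H → H) {A : Type} [Ring A] [Algebra k A]
    (act : H →ₗ[k] A →ₗ[k] A) (coact : A →ₗ[k] A ⊗[k] H) : Prop :=
  IsYD k H Sinv id id act coact ∧
  (∀ (h : H) (a b : A) (s : Finset ℕ) (p q : ℕ → H),
    Coalgebra.comul (R := k) h = ∑ i ∈ s, p i ⊗ₜ[k] q i →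
    act h (a * b) = ∑ i ∈ s, act (p i) a * act (q i) b) ∧
  (∀ h : H, act h 1 = Coalgebra.counit (R := k) h • (1 : A)) ∧
  (coact 1 = (1 : A) ⊗ₜ[k] (1 : H)) ∧
  (∀ (a b : A) (s t : Finset ℕ) (a₀ : ℕ → A) (a₁ : ℕ → H) (b₀ : ℕ → A) (b₁ : ℕ → H),
    coact a = ∑ i ∈ s, a₀ i ⊗ₜ[k] a₁ i →
    coact b = ∑ j ∈ t, b₀ j ⊗ₜ[k] b₁ j →
    coact (a * b) = ∑ i ∈ s, ∑ j ∈ t, (a₀ i * b₀ j) ⊗ₜ[k] (b₁ j * a₁ i))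

/-- Characterization of the smash product multiplication
`(a # b)(a' # b') = a a'₍₀₎ # (a'₍₁₎ · b) b'` on `A ⊗ B`. -/
def SmashMulChar {A B : Type} [Ring A] [Algebra k A] [Ring B] [Algebra k B]
    (actB : H →ₗ[k] B →ₗ[k] B) (coactA : A →ₗ[k] A ⊗[k] H)
    (mul : (A ⊗[k] B) →ₗ[k] (A ⊗[k] B) →ₗ[k] (A ⊗[k] B)) : Prop :=
  ∀ (a a' : A) (b b' : B) (t : Finset ℕ) (a₀ : ℕ → A) (a₁ : ℕ → H),
    coactA a' = ∑ j ∈ t, a₀ j ⊗ₜ[k] a₁ j →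
    mul (a ⊗ₜ[k] b) (a' ⊗ₜ[k] b') = ∑ j ∈ t, (a * a₀ j) ⊗ₜ[k] (actB (a₁ j) b * b')

end GYD

/-!
In Sweedler notation, with `h·(m ⊗ n) = h₁·m ⊗ h₂·n`, the Yetter–Drinfeld condition of `M` gives
`(h·(m ⊗ n))₍₀₎ ⊗ (h·(m ⊗ n))₍₁₎ = h₂·m₍₀₎ ⊗ (h₄·n)₍₀₎ ⊗ (h₄·n)₍₁₎ β(h₃) m₍₁₎ α(S⁻¹h₁)`.
The condition of `N` implies its `S⁻¹`-free form
`(h₂·n)₍₀₎ ⊗ (h₂·n)₍₁₎ β(h₁) = h₁·n₍₀₎ ⊗ γ(h₂) n₍₁₎`, because `β` is multiplicative and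
`S⁻¹(h₂) h₁ = ε(h)`; substituting it turns the right-hand side into
`h₂·(m₍₀₎ ⊗ n₍₀₎) ⊗ γ(h₃) n₍₁₎ m₍₁₎ α(S⁻¹h₁)`, the condition for `M ⊗ N`.
-/

namespace GYD

section NatIndexedSums

theorem exists_nat_sum_add {V X : Type*} [AddCommMonoid X] (φ : V → X) (s t : Finset ℕ)
    (v w : ℕ → V) :
    ∃ (u : Finset ℕ) (z : ℕ → V), ∑ i ∈ s, φ (v i) + ∑ i ∈ t, φ (w i) = ∑ i ∈ u, φ (z i) :=
  ⟨(s.disjSum t).map Equiv.natSumNatEquivNat.toEmbedding,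
    fun i => Sum.elim v w (Equiv.natSumNatEquivNat.symm i), by simp [Finset.sum_disjSum]⟩

variable {R P Q T : Type*} [CommSemiring R] [AddCommMonoid P] [Module R P]
  [AddCommMonoid Q] [Module R Q] [AddCommMonoid T] [Module R T]

theorem exists_nat_sum_tmul (x : P ⊗[R] Q) :
    ∃ (s : Finset ℕ) (p : ℕ → P) (q : ℕ → Q), x = ∑ i ∈ s, p i ⊗ₜ q i := by
  induction x with
  | zero => exact ⟨∅, 0, 0, by simp⟩
  | tmul p q => exact ⟨{0}, fun _ => p, fun _ => q, by simp⟩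
  | add x y hx hy =>
    obtain ⟨s, p, q, rfl⟩ := hx
    obtain ⟨t, p', q', rfl⟩ := hy
    obtain ⟨u, z, hz⟩ := exists_nat_sum_add (fun v : P × Q => v.1 ⊗ₜ[R] v.2) s t
      (fun i => (p i, q i)) (fun i => (p' i, q' i))
    exact ⟨u, fun i => (z i).1, fun i => (z i).2, hz⟩

theorem exists_nat_sum_tmul_tmul (x : (P ⊗[R] Q) ⊗[R] T) :
    ∃ (s : Finset ℕ) (a : ℕ → P) (b : ℕ → Q) (c : ℕ → T),
      x = ∑ i ∈ s, (a i ⊗ₜ b i) ⊗ₜ c i := by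
  induction x with
  | zero => exact ⟨∅, 0, 0, 0, by simp⟩
  | tmul y c =>
    obtain ⟨s, a, b, rfl⟩ := exists_nat_sum_tmul y
    exact ⟨s, a, b, fun _ => c, by simp [sum_tmul]⟩
  | add x y hx hy =>
    obtain ⟨s, a, b, c, rfl⟩ := hx
    obtain ⟨t, a', b', c', rfl⟩ := hy
    obtain ⟨u, z, hz⟩ := exists_nat_sum_add
      (fun v : P × Q × T => (v.1 ⊗ₜ[R] v.2.1) ⊗ₜ[R] v.2.2) s t
      (fun i => (a i, b i, c i)) (fun i => (a' i, b' i, c' i))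
    exact ⟨u, fun i => (z i).1, fun i => (z i).2.1, fun i => (z i).2.2, hz⟩

end NatIndexedSums

section Convolution

variable {R C X Y Z W U T : Type*} [CommSemiring R] [AddCommMonoid C] [Module R C]
  [Coalgebra R C] [AddCommMonoid X] [Module R X] [AddCommMonoid Y] [Module R Y]
  [AddCommMonoid Z] [Module R Z] [AddCommMonoid W] [Module R W] [AddCommMonoid U] [Module R U]
  [AddCommMonoid T] [Module R T]

/-- Every Sweedler computation below is a rebracketing of such convolutions, for `B` a
composition or a pairing, hence an instance of `convolve_assoc`. -/
def convolve (B : X →ₗ[R] Y →ₗ[R] Z) (f : C →ₗ[R] X) (g : C →ₗ[R] Y) : C →ₗ[R] Z :=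
  lift B ∘ₗ map f g ∘ₗ Coalgebra.comul

theorem convolve_apply_eq_sum (B : X →ₗ[R] Y →ₗ[R] Z) (f : C →ₗ[R] X) (g : C →ₗ[R] Y)
    {ι : Type*} {c : C} {s : Finset ι} {p q : ι → C}
    (hc : Coalgebra.comul c = ∑ i ∈ s, p i ⊗ₜ[R] q i) :
    convolve B f g c = ∑ i ∈ s, B (f (p i)) (g (q i)) := by
  simp [convolve, hc, map_sum]

theorem convolve_convolve_right_apply_eq_sum (B : X →ₗ[R] W →ₗ[R] Z)
    (B' : Y →ₗ[R] U →ₗ[R] W) (f : C →ₗ[R] X) (g : C →ₗ[R] Y) (k : C →ₗ[R] U)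
    {ι : Type*} {c : C} {s : Finset ι} {a b d : ι → C}
    (hc : (Coalgebra.comul (R := R)).rTensor C (Coalgebra.comul c)
      = ∑ i ∈ s, (a i ⊗ₜ[R] b i) ⊗ₜ[R] d i) :
    convolve B f (convolve B' g k) c = ∑ i ∈ s, B (f (a i)) (B' (g (b i)) (k (d i))) := by
  have hl : (Coalgebra.comul (R := R)).lTensor C (Coalgebra.comul c)
      = ∑ i ∈ s, a i ⊗ₜ[R] (b i ⊗ₜ[R] d i) := by
    rw [← Coalgebra.coassoc_apply, hc]
    simp [map_sum]
  have hmap : map f (convolve B' g k)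
      = map f (lift B' ∘ₗ map g k) ∘ₗ (Coalgebra.comul (R := R)).lTensor C := by
    ext; simp [convolve]
  rw [convolve, LinearMap.comp_apply, LinearMap.comp_apply, hmap, LinearMap.comp_apply, hl]
  simp [map_sum]

theorem convolve_convolve_left_apply_eq_sum (B : W →ₗ[R] U →ₗ[R] Z)
    (B' : X →ₗ[R] Y →ₗ[R] W) (f : C →ₗ[R] X) (g : C →ₗ[R] Y) (k : C →ₗ[R] U)
    {ι : Type*} {c : C} {s : Finset ι} {a b d : ι → C}
    (hc : (Coalgebra.comul (R := R)).rTensor C (Coalgebra.comul c)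
      = ∑ i ∈ s, (a i ⊗ₜ[R] b i) ⊗ₜ[R] d i) :
    convolve B (convolve B' f g) k c = ∑ i ∈ s, B (B' (f (a i)) (g (b i))) (k (d i)) := by
  have hmap : map (convolve B' f g) k
      = map (lift B' ∘ₗ map f g) k ∘ₗ (Coalgebra.comul (R := R)).rTensor C := by
    ext; simp [convolve]
  rw [convolve, LinearMap.comp_apply, LinearMap.comp_apply, hmap, LinearMap.comp_apply, hc]
  simp [map_sum]

theorem convolve_assoc {X₁ X₂ X₃ Y₁ Y₂ Y₃ V : Type*} [AddCommMonoid X₁] [Module R X₁]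
    [AddCommMonoid X₂] [Module R X₂] [AddCommMonoid X₃] [Module R X₃] [AddCommMonoid Y₁]
    [Module R Y₁] [AddCommMonoid Y₂] [Module R Y₂] [AddCommMonoid Y₃] [Module R Y₃]
    [AddCommMonoid V] [Module R V]
    {B' : X₁ →ₗ[R] W →ₗ[R] Z} {B : X₂ →ₗ[R] X₃ →ₗ[R] W}
    {D' : V →ₗ[R] Y₃ →ₗ[R] Z} {D : Y₁ →ₗ[R] Y₂ →ₗ[R] V}
    {f₁ : C →ₗ[R] X₁} {f₂ : C →ₗ[R] X₂} {f₃ : C →ₗ[R] X₃}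
    {g₁ : C →ₗ[R] Y₁} {g₂ : C →ₗ[R] Y₂} {g₃ : C →ₗ[R] Y₃}
    (h : ∀ a b c, B' (f₁ a) (B (f₂ b) (f₃ c)) = D' (D (g₁ a) (g₂ b)) (g₃ c)) :
    convolve B' f₁ (convolve B f₂ f₃) = convolve D' (convolve D g₁ g₂) g₃ := by
  ext c
  obtain ⟨s, a, b, d, hc⟩ :=
    exists_nat_sum_tmul_tmul ((Coalgebra.comul (R := R)).rTensor C (Coalgebra.comul c))
  rw [convolve_convolve_right_apply_eq_sum _ _ _ _ _ hc,
    convolve_convolve_left_apply_eq_sum _ _ _ _ _ hc]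
  exact Finset.sum_congr rfl fun i _ => h _ _ _

theorem convolve_llcomp_assoc {X₁ X₂ X₃ : Type*} [AddCommMonoid X₁] [Module R X₁]
    [AddCommMonoid X₂] [Module R X₂] [AddCommMonoid X₃] [Module R X₃]
    (f : C →ₗ[R] X₂ →ₗ[R] X₃) (g : C →ₗ[R] X₁ →ₗ[R] X₂) (k : C →ₗ[R] W →ₗ[R] X₁) :
    convolve (LinearMap.llcomp R W X₂ X₃) f (convolve (LinearMap.llcomp R W X₁ X₂) g k)
      = convolve (LinearMap.llcomp R W X₁ X₃) (convolve (LinearMap.llcomp R X₁ X₂ X₃) f g) k :=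
  convolve_assoc fun _ _ _ => rfl

theorem comp_convolve {B : X →ₗ[R] Y →ₗ[R] Z} {B' : W →ₗ[R] U →ₗ[R] T} {Φ : Z →ₗ[R] T}
    {f : C →ₗ[R] X} {g : C →ₗ[R] Y} {f' : C →ₗ[R] W} {g' : C →ₗ[R] U}
    (h : ∀ a b, Φ (B (f a) (g b)) = B' (f' a) (g' b)) :
    Φ ∘ₗ convolve B f g = convolve B' f' g' := by
  ext c
  obtain ⟨s, p, q, hc⟩ := exists_nat_sum_tmul (Coalgebra.comul (R := R) c)
  simp [convolve_apply_eq_sum _ _ _ hc, h]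

theorem convolve_smulRight_counit {B : X →ₗ[R] Y →ₗ[R] Y} {e : X} (he : ∀ y, B e y = y)
    (g : C →ₗ[R] Y) : convolve B ((Coalgebra.counit (R := R)).smulRight e) g = g := by
  ext c
  rw [convolve_apply_eq_sum _ _ _ (Coalgebra.Repr.arbitrary R c).eq.symm]
  conv_rhs => rw [← Coalgebra.sum_counit_smul (Coalgebra.Repr.arbitrary R c)]
  simp [he, map_sum]

end Convolution

section CoefficientMaps

variable {k H P : Type*} [CommSemiring k] [Semiring H] [Bialgebra k H]
  [AddCommMonoid P] [Module k P]

variable (P) in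
def mulRightCoeff : H →ₗ[k] Module.End k (P ⊗[k] H) :=
  LinearMap.lTensorHom P ∘ₗ (LinearMap.mul k H).flip

@[simp] theorem mulRightCoeff_tmul (u : H) (p : P) (a : H) :
    mulRightCoeff P u (p ⊗ₜ[k] a) = p ⊗ₜ (a * u) := rfl

theorem mulRightCoeff_mul (x y : H) :
    mulRightCoeff P (x * y) = mulRightCoeff P y ∘ₗ mulRightCoeff (k := k) P x := by
  ext; simp [mul_assoc]

def coactOfAct (act : H →ₗ[k] P →ₗ[k] P) (coact : P →ₗ[k] P ⊗[k] H) :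
    H →ₗ[k] P →ₗ[k] P ⊗[k] H :=
  LinearMap.llcomp k P P (P ⊗[k] H) coact ∘ₗ act

@[simp] theorem coactOfAct_apply (act : H →ₗ[k] P →ₗ[k] P) (coact : P →ₗ[k] P ⊗[k] H)
    (h : H) (m : P) : coactOfAct act coact h m = coact (act h m) := rfl

def twistCoact (coact : P →ₗ[k] P ⊗[k] H) :
    Module.End k P →ₗ[k] H →ₗ[k] P →ₗ[k] P ⊗[k] H :=
  ((mapBilinear (RingHom.id k) P H P H).compl₂ (LinearMap.mul k H)).compr₂
    ((LinearMap.llcomp k P (P ⊗[k] H) (P ⊗[k] H)).flip coact)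

@[simp] theorem twistCoact_apply (coact : P →ₗ[k] P ⊗[k] H) (f : Module.End k P) (u : H)
    (m : P) : twistCoact coact f u m = map f (LinearMap.mulLeft k u) (coact m) := rfl

/-- The `(α, β)`-Yetter–Drinfeld compatibility
`(h·m)₍₀₎ ⊗ (h·m)₍₁₎ = h₂·m₍₀₎ ⊗ β(h₃) m₍₁₎ α(S⁻¹h₁)`. -/
def IsYDCompat (Sinv α β : H →ₗ[k] H) (act : H →ₗ[k] P →ₗ[k] P)
    (coact : P →ₗ[k] P ⊗[k] H) : Prop :=
  coactOfAct act coact = convolve (LinearMap.llcomp k P (P ⊗[k] H) (P ⊗[k] H))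
    (mulRightCoeff P ∘ₗ α ∘ₗ Sinv) (convolve (twistCoact coact) act β)

/-- The `S⁻¹`-free compatibility `(h₂·m)₍₀₎ ⊗ (h₂·m)₍₁₎ α(h₁) = h₁·m₍₀₎ ⊗ β(h₂) m₍₁₎`. -/
def IsYDMulCompat (α β : H →ₗ[k] H) (act : H →ₗ[k] P →ₗ[k] P)
    (coact : P →ₗ[k] P ⊗[k] H) : Prop :=
  convolve (LinearMap.llcomp k P (P ⊗[k] H) (P ⊗[k] H)) (mulRightCoeff P ∘ₗ α)
    (coactOfAct act coact) = convolve (twistCoact coact) act β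

theorem convolve_twistCoact_apply_eq_sum (act : H →ₗ[k] P →ₗ[k] P)
    (coact : P →ₗ[k] P ⊗[k] H) (Sinv α β : H →ₗ[k] H) {ι κ : Type*} {h : H} {m : P}
    {s : Finset ι} {t : Finset κ} {a b c : ι → H} {m₀ : κ → P} {m₁ : κ → H}
    (hX : (Coalgebra.comul (R := k)).rTensor H (Coalgebra.comul (R := k) h)
        = ∑ i ∈ s, (a i ⊗ₜ[k] b i) ⊗ₜ[k] c i)
    (hm : coact m = ∑ j ∈ t, m₀ j ⊗ₜ[k] m₁ j) :
    convolve (LinearMap.llcomp k P (P ⊗[k] H) (P ⊗[k] H)) (mulRightCoeff P ∘ₗ α ∘ₗ Sinv)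
        (convolve (twistCoact coact) act β) h m
      = ∑ i ∈ s, ∑ j ∈ t, act (b i) (m₀ j) ⊗ₜ[k] (β (c i) * m₁ j * α (Sinv (a i))) := by
  rw [convolve_convolve_right_apply_eq_sum _ _ _ _ _ hX]
  simp [hm, map_sum]

theorem IsYDCompat.coact_act_eq_sum {act : H →ₗ[k] P →ₗ[k] P} {coact : P →ₗ[k] P ⊗[k] H}
    {Sinv α β : H →ₗ[k] H} (hP : IsYDCompat Sinv α β act coact) {ι κ : Type*} {h : H}
    {m : P} {s : Finset ι} {t : Finset κ} {a b c : ι → H} {m₀ : κ → P} {m₁ : κ → H}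
    (hX : (Coalgebra.comul (R := k)).rTensor H (Coalgebra.comul (R := k) h)
        = ∑ i ∈ s, (a i ⊗ₜ[k] b i) ⊗ₜ[k] c i)
    (hm : coact m = ∑ j ∈ t, m₀ j ⊗ₜ[k] m₁ j) :
    coact (act h m)
      = ∑ i ∈ s, ∑ j ∈ t, act (b i) (m₀ j) ⊗ₜ[k] (β (c i) * m₁ j * α (Sinv (a i))) := by
  rw [← coactOfAct_apply act coact, hP, convolve_twistCoact_apply_eq_sum act coact Sinv α β hX hm]

end CoefficientMaps

section TensorProduct

variable {k H M N : Type*} [CommSemiring k] [Semiring H] [Bialgebra k H]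
  [AddCommMonoid M] [Module k M] [AddCommMonoid N] [Module k N]

variable (k H M N) in
def coactPairing : (M ⊗[k] H) ⊗[k] (N ⊗[k] H) →ₗ[k] (M ⊗[k] N) ⊗[k] H :=
  (LinearMap.mul' k H ∘ₗ TensorProduct.comm k H H).lTensor (M ⊗[k] N) ∘ₗ
    (tensorTensorTensorComm k M H N H).toLinearMap

@[simp] theorem coactPairing_tmul (m : M) (a : H) (n : N) (b : H) :
    coactPairing k H M N ((m ⊗ₜ a) ⊗ₜ (n ⊗ₜ b)) = (m ⊗ₜ n) ⊗ₜ (b * a) := rfl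

theorem mulRightCoeff_coactPairing (u : H) (X : M ⊗[k] H) (Y : N ⊗[k] H) :
    mulRightCoeff (M ⊗[k] N) u (coactPairing k H M N (X ⊗ₜ Y))
      = coactPairing k H M N (mulRightCoeff M u X ⊗ₜ Y) := by
  have : mulRightCoeff (M ⊗[k] N) u ∘ₗ coactPairing k H M N
      = coactPairing k H M N ∘ₗ (mulRightCoeff M u).rTensor (N ⊗[k] H) := by
    ext; simp [mul_assoc]
  exact congr($this (X ⊗ₜ Y))

theorem coactPairing_map_mulLeft_tmul (f : Module.End k M) (u : H) (X : M ⊗[k] H)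
    (Y : N ⊗[k] H) :
    coactPairing k H M N (map f (LinearMap.mulLeft k u) X ⊗ₜ Y)
      = coactPairing k H M N (map f LinearMap.id X ⊗ₜ mulRightCoeff N u Y) := by
  have : coactPairing k H M N ∘ₗ (map f (LinearMap.mulLeft k u)).rTensor (N ⊗[k] H)
      = coactPairing k H M N ∘ₗ map (map f LinearMap.id) (mulRightCoeff N u) := by
    ext; simp [mul_assoc]
  exact congr($this (X ⊗ₜ Y))

theorem coactPairing_map_id_tmul_map (f : Module.End k M) (g : Module.End k N) (u : H)
    (X : M ⊗[k] H) (Y : N ⊗[k] H) :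
    coactPairing k H M N (map f LinearMap.id X ⊗ₜ map g (LinearMap.mulLeft k u) Y)
      = map (map f g) (LinearMap.mulLeft k u) (coactPairing k H M N (X ⊗ₜ Y)) := by
  have : coactPairing k H M N ∘ₗ map (map f LinearMap.id) (map g (LinearMap.mulLeft k u))
      = map (map f g) (LinearMap.mulLeft k u) ∘ₗ coactPairing k H M N := by
    ext; simp [mul_assoc]
  exact congr($this (X ⊗ₜ Y))

variable (k H M N) in
def coactPairingHom :
    (M →ₗ[k] M ⊗[k] H) →ₗ[k] (N →ₗ[k] N ⊗[k] H) →ₗ[k] M ⊗[k] N →ₗ[k] (M ⊗[k] N) ⊗[k] H :=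
  (mapBilinear (RingHom.id k) M N (M ⊗[k] H) (N ⊗[k] H)).compr₂
    (LinearMap.llcomp k (M ⊗[k] N) _ _ (coactPairing k H M N))

@[simp] theorem coactPairingHom_apply (f : M →ₗ[k] M ⊗[k] H) (g : N →ₗ[k] N ⊗[k] H) :
    coactPairingHom k H M N f g = coactPairing k H M N ∘ₗ map f g := rfl

theorem coactOfAct_tensor (actM : H →ₗ[k] M →ₗ[k] M) (coactM : M →ₗ[k] M ⊗[k] H)
    (actN : H →ₗ[k] N →ₗ[k] N) (coactN : N →ₗ[k] N ⊗[k] H) :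
    coactOfAct (convolve (mapBilinear (RingHom.id k) M N M N) actM actN)
        (coactPairing k H M N ∘ₗ map coactM coactN)
      = convolve (coactPairingHom k H M N) (coactOfAct actM coactM) (coactOfAct actN coactN) :=
  comp_convolve fun a b => by ext; simp

theorem convolve_coactPairingHom_mulRightCoeff (φ : H →ₗ[k] H)
    (F : H →ₗ[k] M →ₗ[k] M ⊗[k] H) (G : H →ₗ[k] N →ₗ[k] N ⊗[k] H) :
    convolve (coactPairingHom k H M N)
        (convolve (LinearMap.llcomp k M (M ⊗[k] H) (M ⊗[k] H)) (mulRightCoeff M ∘ₗ φ) F) G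
      = convolve (LinearMap.llcomp k (M ⊗[k] N) _ _) (mulRightCoeff (M ⊗[k] N) ∘ₗ φ)
          (convolve (coactPairingHom k H M N) F G) := by
  refine (convolve_assoc fun a b c => ?_).symm
  ext m n
  simp [mulRightCoeff_coactPairing, LinearMap.llcomp_apply']

/-- The coefficient `φ(h₂)` produced on `M` passes to the right of the coaction of `N`. -/
theorem convolve_coactPairingHom_twistCoact (act : H →ₗ[k] M →ₗ[k] M)
    (coact : M →ₗ[k] M ⊗[k] H) (φ : H →ₗ[k] H) (G : H →ₗ[k] N →ₗ[k] N ⊗[k] H) :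
    convolve (coactPairingHom k H M N) (convolve (twistCoact coact) act φ) G
      = convolve (coactPairingHom k H M N ∘ₗ (twistCoact coact).flip 1) act
          (convolve (LinearMap.llcomp k N (N ⊗[k] H) (N ⊗[k] H)) (mulRightCoeff N ∘ₗ φ) G) := by
  refine (convolve_assoc fun a b c => ?_).symm
  ext m n
  simp [coactPairing_map_mulLeft_tmul, LinearMap.llcomp_apply']

theorem convolve_twistCoact_tensor (actM : H →ₗ[k] M →ₗ[k] M) (coactM : M →ₗ[k] M ⊗[k] H)
    (actN : H →ₗ[k] N →ₗ[k] N) (coactN : N →ₗ[k] N ⊗[k] H) (φ : H →ₗ[k] H) :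
    convolve (coactPairingHom k H M N ∘ₗ (twistCoact coactM).flip 1) actM
        (convolve (twistCoact coactN) actN φ)
      = convolve (twistCoact (coactPairing k H M N ∘ₗ map coactM coactN))
          (convolve (mapBilinear (RingHom.id k) M N M N) actM actN) φ := by
  refine convolve_assoc fun a b c => ?_
  ext m n
  simp [coactPairing_map_id_tmul_map]

theorem IsYDCompat.tensor {Sinv α β γ : H →ₗ[k] H} {actM : H →ₗ[k] M →ₗ[k] M}
    {coactM : M →ₗ[k] M ⊗[k] H} {actN : H →ₗ[k] N →ₗ[k] N} {coactN : N →ₗ[k] N ⊗[k] H}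
    (hM : IsYDCompat Sinv α β actM coactM) (hN : IsYDMulCompat β γ actN coactN) :
    IsYDCompat Sinv α γ (convolve (mapBilinear (RingHom.id k) M N M N) actM actN)
      (coactPairing k H M N ∘ₗ map coactM coactN) := by
  rw [IsYDCompat, coactOfAct_tensor, hM, convolve_coactPairingHom_mulRightCoeff,
    convolve_coactPairingHom_twistCoact, ← convolve_twistCoact_tensor]
  exact congrArg _ (congrArg _ hN)

theorem counit_coactPairing_map {coactM : M →ₗ[k] M ⊗[k] H} {coactN : N →ₗ[k] N ⊗[k] H}
    (hM : (TensorProduct.rid k M).toLinearMap ∘ₗ (Coalgebra.counit (R := k)).lTensor M ∘ₗ coactM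
      = LinearMap.id)
    (hN : (TensorProduct.rid k N).toLinearMap ∘ₗ (Coalgebra.counit (R := k)).lTensor N ∘ₗ coactN
      = LinearMap.id) :
    (TensorProduct.rid k (M ⊗[k] N)).toLinearMap ∘ₗ
        (Coalgebra.counit (R := k)).lTensor (M ⊗[k] N) ∘ₗ coactPairing k H M N ∘ₗ
          map coactM coactN = LinearMap.id := by
  have hpair : (TensorProduct.rid k (M ⊗[k] N)).toLinearMap ∘ₗ
        (Coalgebra.counit (R := k)).lTensor (M ⊗[k] N) ∘ₗ coactPairing k H M N
      = map ((TensorProduct.rid k M).toLinearMap ∘ₗ (Coalgebra.counit (R := k)).lTensor M)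
          ((TensorProduct.rid k N).toLinearMap ∘ₗ (Coalgebra.counit (R := k)).lTensor N) := by
    ext; simp [smul_tmul, smul_smul, mul_comm]
  calc _ = map ((TensorProduct.rid k M).toLinearMap ∘ₗ (Coalgebra.counit (R := k)).lTensor M ∘ₗ
          coactM) ((TensorProduct.rid k N).toLinearMap ∘ₗ
            (Coalgebra.counit (R := k)).lTensor N ∘ₗ coactN) := by
        simpa only [LinearMap.comp_assoc, map_comp] using congrArg (· ∘ₗ map coactM coactN) hpair
    _ = LinearMap.id := by rw [hM, hN, map_id]

theorem rTensor_coactPairing_assoc_symm (m : M) (n : N) (X Y : H ⊗[k] H) :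
    (coactPairing k H M N).rTensor H (coactPairing k H (M ⊗[k] H) (N ⊗[k] H)
        ((TensorProduct.assoc k M H H).symm (m ⊗ₜ X) ⊗ₜ
          (TensorProduct.assoc k N H H).symm (n ⊗ₜ Y)))
      = (TensorProduct.assoc k (M ⊗[k] N) H H).symm ((m ⊗ₜ n) ⊗ₜ (Y * X)) := by
  induction X with
  | zero => simp
  | add X X' hX hX' => simp only [tmul_add, map_add, add_tmul, mul_add, hX, hX']
  | tmul a a' =>
    induction Y with
    | zero => simp
    | add Y Y' hY hY' => simp only [tmul_add, map_add, add_mul, hY, hY']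
    | tmul b b' => simp

theorem coassoc_coactPairing_map {coactM : M →ₗ[k] M ⊗[k] H} {coactN : N →ₗ[k] N ⊗[k] H}
    (hM : coactM.rTensor H ∘ₗ coactM = (TensorProduct.assoc k M H H).symm.toLinearMap ∘ₗ
      (Coalgebra.comul (R := k)).lTensor M ∘ₗ coactM)
    (hN : coactN.rTensor H ∘ₗ coactN = (TensorProduct.assoc k N H H).symm.toLinearMap ∘ₗ
      (Coalgebra.comul (R := k)).lTensor N ∘ₗ coactN) :
    (coactPairing k H M N ∘ₗ map coactM coactN).rTensor H ∘ₗ coactPairing k H M N ∘ₗ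
        map coactM coactN
      = (TensorProduct.assoc k (M ⊗[k] N) H H).symm.toLinearMap ∘ₗ
          (Coalgebra.comul (R := k)).lTensor (M ⊗[k] N) ∘ₗ coactPairing k H M N ∘ₗ
            map coactM coactN := by
  have hpair : (coactPairing k H M N ∘ₗ map coactM coactN).rTensor H ∘ₗ coactPairing k H M N
      = (coactPairing k H M N).rTensor H ∘ₗ coactPairing k H (M ⊗[k] H) (N ⊗[k] H) ∘ₗ
          map (coactM.rTensor H) (coactN.rTensor H) := by
    ext; simp
  have hcomul : (coactPairing k H M N).rTensor H ∘ₗ coactPairing k H (M ⊗[k] H) (N ⊗[k] H) ∘ₗ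
        map ((TensorProduct.assoc k M H H).symm.toLinearMap ∘ₗ
            (Coalgebra.comul (R := k)).lTensor M)
          ((TensorProduct.assoc k N H H).symm.toLinearMap ∘ₗ
            (Coalgebra.comul (R := k)).lTensor N)
      = (TensorProduct.assoc k (M ⊗[k] N) H H).symm.toLinearMap ∘ₗ
          (Coalgebra.comul (R := k)).lTensor (M ⊗[k] N) ∘ₗ coactPairing k H M N := by
    ext m a n b
    simp [Bialgebra.comul_mul, rTensor_coactPairing_assoc_symm]
  rw [← LinearMap.comp_assoc, hpair, LinearMap.comp_assoc, LinearMap.comp_assoc, ← map_comp,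
    hM, hN]
  simpa only [LinearMap.comp_assoc, map_comp] using congrArg (· ∘ₗ map coactM coactN) hcomul

def tensorActAlgHom (φM : H →ₐ[k] Module.End k M) (φN : H →ₐ[k] Module.End k N) :
    H →ₐ[k] Module.End k (M ⊗[k] N) :=
  Module.endTensorEndAlgHom.comp ((Algebra.TensorProduct.map φM φN).comp (Bialgebra.comulAlgHom k H))

theorem toLinearMap_tensorActAlgHom (φM : H →ₐ[k] Module.End k M)
    (φN : H →ₐ[k] Module.End k N) :
    (tensorActAlgHom φM φN).toLinearMap
      = convolve (mapBilinear (RingHom.id k) M N M N) φM.toLinearMap φN.toLinearMap := by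
  have : Module.endTensorEndAlgHom.toLinearMap ∘ₗ (Algebra.TensorProduct.map φM φN).toLinearMap
      = lift (mapBilinear (RingHom.id k) M N M N) ∘ₗ map φM.toLinearMap φN.toLinearMap := by
    ext; rfl
  ext h : 1
  exact congr($this (Coalgebra.comul h))

end TensorProduct

section AntipodeInverse

variable {k H : Type} [Field k] [Ring H] [HopfAlgebra k H]

open HopfAlgebra

theorem IsAntipodeInv.exists_linearMap {Sinv : H → H} (hS : IsAntipodeInv k H Sinv) :
    ∃ T : H →ₗ[k] H, ⇑T = Sinv := by
  have hbij : Function.Bijective (antipode k : H → H) :=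
    ⟨Function.LeftInverse.injective hS.2, Function.RightInverse.surjective hS.1⟩
  refine ⟨(LinearEquiv.ofBijective _ hbij).symm.toLinearMap, funext fun h => hbij.1 ?_⟩
  simp [hS.1]

theorem convolve_mul_flip_id_antipodeInv {Sinv : H →ₗ[k] H} (hS : IsAntipodeInv k H Sinv) :
    convolve (LinearMap.mul k H).flip LinearMap.id Sinv
      = Algebra.linearMap k H ∘ₗ Coalgebra.counit := by
  have h : antipode k ∘ₗ convolve (LinearMap.mul k H).flip LinearMap.id Sinv
      = antipode k ∘ₗ Algebra.linearMap k H ∘ₗ Coalgebra.counit := by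
    rw [comp_convolve (B' := LinearMap.mul k H) (f' := antipode k) (g' := LinearMap.id)
      fun a b => by simp [antipode_mul_antidistrib, hS.1 b]]
    exact mul_antipode_rTensor_comul.trans (by ext; simp [Algebra.algebraMap_eq_smul_one])
  ext x
  exact Function.LeftInverse.injective hS.2 (LinearMap.congr_fun h x)

variable {P : Type} [AddCommGroup P] [Module k P]

variable (P) in
theorem convolve_mulRightCoeff_antipodeInv (α : H →ₐ[k] H) {Sinv : H →ₗ[k] H}
    (hS : IsAntipodeInv k H Sinv) :
    convolve (LinearMap.llcomp k (P ⊗[k] H) (P ⊗[k] H) (P ⊗[k] H))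
        (mulRightCoeff P ∘ₗ α.toLinearMap) (mulRightCoeff P ∘ₗ α.toLinearMap ∘ₗ Sinv)
      = (Coalgebra.counit (R := k) (A := H)).smulRight LinearMap.id := by
  rw [← comp_convolve (Φ := mulRightCoeff P ∘ₗ α.toLinearMap)
    (B := (LinearMap.mul k H).flip) (f := LinearMap.id) (g := Sinv)
    fun a b => by simp [mulRightCoeff_mul, LinearMap.llcomp_apply'],
    convolve_mul_flip_id_antipodeInv hS]
  ext; simp [Algebra.algebraMap_eq_smul_one]

theorem IsYDCompat.isYDMulCompat {α : H →ₐ[k] H} {β Sinv : H →ₗ[k] H}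
    {act : H →ₗ[k] P →ₗ[k] P} {coact : P →ₗ[k] P ⊗[k] H}
    (hP : IsYDCompat Sinv α.toLinearMap β act coact) (hS : IsAntipodeInv k H Sinv) :
    IsYDMulCompat α.toLinearMap β act coact := by
  rw [IsYDMulCompat, hP, convolve_llcomp_assoc, convolve_mulRightCoeff_antipodeInv P α hS]
  exact convolve_smulRight_counit (fun _ => rfl) _

end AntipodeInverse

section Representations

variable {k H : Type} [Field k] [Ring H] [HopfAlgebra k H] {P : Type} [AddCommGroup P] [Module k P]

theorem IsYD.isYDCompat {act : H →ₗ[k] P →ₗ[k] P} {coact : P →ₗ[k] P ⊗[k] H}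
    {Sinv α β : H →ₗ[k] H} (hP : IsYD k H Sinv α β act coact) :
    IsYDCompat Sinv α β act coact := by
  ext h m
  obtain ⟨s, a, b, c, hX⟩ := exists_nat_sum_tmul_tmul
    ((Coalgebra.comul (R := k)).rTensor H (Coalgebra.comul (R := k) h))
  obtain ⟨t, m₀, m₁, hm⟩ := exists_nat_sum_tmul (coact m)
  rw [coactOfAct_apply, hP.2.2.2.2 h m s t a b c m₀ m₁ hX hm,
    convolve_twistCoact_apply_eq_sum act coact Sinv α β hX hm]

variable {M N : Type} [AddCommGroup M] [Module k M] [AddCommGroup N] [Module k N]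

theorem TensorActChar.eq_convolve {actM : H →ₗ[k] M →ₗ[k] M} {actN : H →ₗ[k] N →ₗ[k] N}
    {act : H →ₗ[k] M ⊗[k] N →ₗ[k] M ⊗[k] N} (hact : TensorActChar k H id id actM actN act) :
    act = convolve (mapBilinear (RingHom.id k) M N M N) actM actN := by
  ext h m n
  obtain ⟨s, p, q, hh⟩ := exists_nat_sum_tmul (Coalgebra.comul (R := k) h)
  simp [hact h m n s p q hh, convolve_apply_eq_sum _ _ _ hh]

theorem TensorCoactChar.eq_comp_map {coactM : M →ₗ[k] M ⊗[k] H} {coactN : N →ₗ[k] N ⊗[k] H}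
    {coact : M ⊗[k] N →ₗ[k] (M ⊗[k] N) ⊗[k] H}
    (hcoact : TensorCoactChar k H coactM coactN coact) :
    coact = coactPairing k H M N ∘ₗ map coactM coactN := by
  ext m n
  obtain ⟨s, m₀, m₁, hm⟩ := exists_nat_sum_tmul (coactM m)
  obtain ⟨t, n₀, n₁, hn⟩ := exists_nat_sum_tmul (coactN n)
  simp [hcoact m n s t m₀ m₁ n₀ n₁ hm hn, hm, hn, sum_tmul, tmul_sum]
  exact Finset.sum_comm

end Representations

end GYD

theorem statement_0_general
    (k H : Type) [Field k] [Ring H] [HopfAlgebra k H]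
    (Sinv : H → H) (hS : GYD.IsAntipodeInv k H Sinv)
    (α β γ : H ≃ₗ[k] H)
    (hβ : GYD.IsHopfAut k H β)
    (M N : Type) [AddCommGroup M] [Module k M] [AddCommGroup N] [Module k N]
    (actM : H →ₗ[k] M →ₗ[k] M) (coactM : M →ₗ[k] M ⊗[k] H)
    (actN : H →ₗ[k] N →ₗ[k] N) (coactN : N →ₗ[k] N ⊗[k] H)
    (hM : GYD.IsYD k H Sinv ⇑α ⇑β actM coactM)
    (hN : GYD.IsYD k H Sinv ⇑β ⇑γ actN coactN)
    (act₁ : H →ₗ[k] (M ⊗[k] N) →ₗ[k] (M ⊗[k] N))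
    (coact₁ : M ⊗[k] N →ₗ[k] (M ⊗[k] N) ⊗[k] H)
    (hact : GYD.TensorActChar k H id id actM actN act₁)
    (hcoact : GYD.TensorCoactChar k H coactM coactN coact₁) :
    GYD.IsYD k H Sinv ⇑α ⇑γ act₁ coact₁ := by
  obtain ⟨Sinv, rfl⟩ := hS.exists_linearMap
  obtain rfl := hact.eq_convolve
  obtain rfl := hcoact.eq_comp_map
  let φM : H →ₐ[k] Module.End k M :=
    AlgHom.ofLinearMap actM (LinearMap.ext hM.1) fun g h => LinearMap.ext (hM.2.1 g h)
  let φN : H →ₐ[k] Module.End k N :=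
    AlgHom.ofLinearMap actN (LinearMap.ext hN.1) fun g h => LinearMap.ext (hN.2.1 g h)
  have hφ : (GYD.tensorActAlgHom φM φN).toLinearMap
      = GYD.convolve (mapBilinear (RingHom.id k) M N M N) actM actN :=
    GYD.toLinearMap_tensorActAlgHom φM φN
  refine ⟨fun x => ?_, fun g h x => ?_, fun x => ?_, fun x => ?_, ?_⟩
  · rw [← hφ]; simp
  · rw [← hφ]; simp
  · exact congr($(GYD.coassoc_coactPairing_map (LinearMap.ext hM.2.2.1)
      (LinearMap.ext hN.2.2.1)) x)
  · exact congr($(GYD.counit_coactPairing_map (LinearMap.ext hM.2.2.2.1)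
      (LinearMap.ext hN.2.2.2.1)) x)
  · intro h x s t a b c x₀ x₁ hX hx
    let β' : H →ₐ[k] H := AlgHom.ofLinearMap β hβ.2.1 hβ.1
    have hMc : GYD.IsYDCompat Sinv α.toLinearMap β.toLinearMap actM coactM := hM.isYDCompat
    have hNc : GYD.IsYDCompat Sinv β'.toLinearMap γ.toLinearMap actN coactN := hN.isYDCompat
    exact (hMc.tensor (hNc.isYDMulCompat hS)).coact_act_eq_sum hX hx

theorem statement_0
    (k H : Type) [Field k] [Ring H] [HopfAlgebra k H]
    (Sinv : H → H) (hS : GYD.IsAntipodeInv k H Sinv)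
    (α β γ : H ≃ₗ[k] H)
    (hα : GYD.IsHopfAut k H α) (hβ : GYD.IsHopfAut k H β) (hγ : GYD.IsHopfAut k H γ)
    (M N : Type) [AddCommGroup M] [Module k M] [AddCommGroup N] [Module k N]
    (actM : H →ₗ[k] M →ₗ[k] M) (coactM : M →ₗ[k] M ⊗[k] H)
    (actN : H →ₗ[k] N →ₗ[k] N) (coactN : N →ₗ[k] N ⊗[k] H)
    (hM : GYD.IsYD k H Sinv ⇑α ⇑β actM coactM)
    (hN : GYD.IsYD k H Sinv ⇑β ⇑γ actN coactN)
    (act₁ : H →ₗ[k] (M ⊗[k] N) →ₗ[k] (M ⊗[k] N))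
    (coact₁ : M ⊗[k] N →ₗ[k] (M ⊗[k] N) ⊗[k] H)
    (hact : GYD.TensorActChar k H id id actM actN act₁)
    (hcoact : GYD.TensorCoactChar k H coactM coactN coact₁) :
    GYD.IsYD k H Sinv ⇑α ⇑γ act₁ coact₁ :=
  statement_0_general k H Sinv hS α β γ hβ M N actM coactM actN coactN hM hN act₁ coact₁ hact hcoact
end
end

section
/- Let α, β, γ ∈ Aut_Hopf(H), let M be an (α,β)-Yetter-Drinfeld module and N a (γ,α)-Yetter-Drinfeld module. Then M ⊗ N, endowed with the left H-action h·(m⊗n) = h₂·m ⊗ h₁·n and the right H-coaction m⊗n ↦ (m₍₀₎ ⊗ n₍₀₎) ⊗ m₍₁₎n₍₁₎ (structures 'of type two'), is a (γ,β)-Yetter-Drinfeld module. -/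
open TensorProduct

noncomputable section

/-
For an `(α, β)`-Yetter-Drinfeld module the compatibility condition has the antipode-free form
`(y₂·m)₍₀₎ ⊗ (y₂·m)₍₁₎ α(y₁) = y₁·m₍₀₎ ⊗ β(y₂) m₍₁₎`: substituting the condition on the left
produces the factor `α(S⁻¹(y₂) y₁)`, which collapses to `ε(y)` by the antipode axiom.

For `h·(m ⊗ n) = h₂·m ⊗ h₁·n`, expanding the coaction of `h₁·n` by the `(γ, α)`-condition of `N`
gives `(h₄·m)₍₀₎ ⊗ h₂·n₍₀₎ ⊗ (h₄·m)₍₁₎ α(h₃) n₍₁₎ γ(S⁻¹ h₁)`. The antipode-free form of `M`,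
applied to `h₃ ⊗ h₄`, turns this into `h₃·m₍₀₎ ⊗ h₂·n₍₀₎ ⊗ β(h₄) m₍₁₎ n₍₁₎ γ(S⁻¹ h₁)`, which is
the `(γ, β)`-condition for `M ⊗ N`.
-/

open Coalgebra HopfAlgebra

theorem Finset.exists_nat_sum_eq {α M : Type*} [Nonempty α] [AddCommMonoid M] (S : Finset α)
    (f : α → M) : ∃ (s : Finset ℕ) (g : ℕ → α), ∑ x ∈ S, f x = ∑ i ∈ s, f (g i) := by
  refine ⟨Finset.range S.toList.length, fun i => S.toList.getD i (Classical.arbitrary α), ?_⟩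
  rw [Finset.sum_range, ← Finset.sum_map_toList, ← Fin.sum_univ_fun_getElem]
  exact Finset.sum_congr rfl fun i _ => by simp [List.getElem?_eq_getElem i.2]

namespace TensorProduct

variable {R P Q T : Type*} [CommSemiring R] [AddCommMonoid P] [Module R P] [AddCommMonoid Q]
  [Module R Q] [AddCommMonoid T] [Module R T]

theorem exists_nat_sum_tmul (x : P ⊗[R] Q) :
    ∃ (s : Finset ℕ) (p : ℕ → P) (q : ℕ → Q), x = ∑ i ∈ s, p i ⊗ₜ[R] q i := by
  obtain ⟨S, rfl⟩ := exists_finset x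
  obtain ⟨s, g, hg⟩ := S.exists_nat_sum_eq (fun z => z.1 ⊗ₜ[R] z.2)
  exact ⟨s, fun i => (g i).1, fun i => (g i).2, hg⟩

theorem exists_nat_sum_tmul_tmul (x : (P ⊗[R] Q) ⊗[R] T) :
    ∃ (s : Finset ℕ) (a : ℕ → P) (b : ℕ → Q) (c : ℕ → T),
      x = ∑ i ∈ s, (a i ⊗ₜ[R] b i) ⊗ₜ[R] c i := by
  obtain ⟨s, y, c, rfl⟩ := exists_nat_sum_tmul x
  choose t a b hy using fun i => exists_nat_sum_tmul (y i)
  obtain ⟨u, g, hg⟩ := (s.sigma t).exists_nat_sum_eq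
    (fun z => (a z.1 z.2 ⊗ₜ[R] b z.1 z.2) ⊗ₜ[R] c z.1)
  refine ⟨u, fun l => a (g l).1 (g l).2, fun l => b (g l).1 (g l).2, fun l => c (g l).1, ?_⟩
  rw [← hg, Finset.sum_sigma]
  simp_rw [hy, sum_tmul]

end TensorProduct

namespace GYD

section Twists

variable {k H W M N : Type*} [CommSemiring k] [Semiring H] [Algebra k H]
  [AddCommMonoid W] [Module k W] [AddCommMonoid M] [Module k M] [AddCommMonoid N] [Module k N]

def ydTwist (act : H →ₗ[k] W →ₗ[k] W) (σ β : H →ₗ[k] H) :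
    ((H ⊗[k] H) ⊗[k] H) ⊗[k] (W ⊗[k] H) →ₗ[k] W ⊗[k] H :=
  LinearMap.lTensor W (LinearMap.mul' k H) ∘ₗ
  LinearMap.lTensor W (TensorProduct.comm k H H).toLinearMap ∘ₗ
  (TensorProduct.assoc k W H H).toLinearMap ∘ₗ
  map ((TensorProduct.comm k H W).toLinearMap ∘ₗ map σ (lift act) ∘ₗ
      (TensorProduct.assoc k H H W).toLinearMap)
    (LinearMap.mul' k H ∘ₗ map β LinearMap.id) ∘ₗ
  (tensorTensorTensorComm k (H ⊗[k] H) H W H).toLinearMap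

@[simp] lemma ydTwist_tmul (act : H →ₗ[k] W →ₗ[k] W) (σ β : H →ₗ[k] H) (a b c : H) (w : W)
    (x : H) :
    ydTwist act σ β (((a ⊗ₜ[k] b) ⊗ₜ[k] c) ⊗ₜ[k] (w ⊗ₜ[k] x)) = act b w ⊗ₜ (β c * x * σ a) := by
  simp [ydTwist, mul_assoc]

def mulRightOf (α : H →ₗ[k] H) : H ⊗[k] (W ⊗[k] H) →ₗ[k] W ⊗[k] H :=
  LinearMap.lTensor W (LinearMap.mul' k H ∘ₗ (TensorProduct.comm k H H).toLinearMap ∘ₗ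
    LinearMap.rTensor H α) ∘ₗ (TensorProduct.leftComm k H W H).toLinearMap

@[simp] lemma mulRightOf_tmul (α : H →ₗ[k] H) (c : H) (w : W) (x : H) :
    mulRightOf α (c ⊗ₜ[k] (w ⊗ₜ[k] x)) = w ⊗ₜ (x * α c) := by
  simp [mulRightOf]

def shuffleMul : (M ⊗[k] H) ⊗[k] (N ⊗[k] H) →ₗ[k] (M ⊗[k] N) ⊗[k] H :=
  LinearMap.lTensor (M ⊗[k] N) (LinearMap.mul' k H) ∘ₗ
    (tensorTensorTensorComm k M H N H).toLinearMap

@[simp] lemma shuffleMul_tmul (m : M) (x : H) (n : N) (y : H) :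
    shuffleMul ((m ⊗ₜ[k] x) ⊗ₜ[k] (n ⊗ₜ[k] y)) = (m ⊗ₜ n) ⊗ₜ (x * y) := by
  simp [shuffleMul]

theorem shuffleMul_ydTwist {actN : H →ₗ[k] N →ₗ[k] N} {σ α : H →ₗ[k] H} (hα : α 1 = 1)
    (U : H ⊗[k] H) (c : H) (X : M ⊗[k] H) (Y : N ⊗[k] H) :
    shuffleMul (X ⊗ₜ ydTwist actN σ α ((U ⊗ₜ c) ⊗ₜ Y)) =
      shuffleMul (mulRightOf α (c ⊗ₜ X) ⊗ₜ ydTwist actN σ α ((U ⊗ₜ 1) ⊗ₜ Y)) := by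
  induction X using TensorProduct.induction_on with
  | zero => simp
  | add X X' hX hX' => simp only [add_tmul, tmul_add, map_add, hX, hX']
  | tmul m x =>
    induction Y using TensorProduct.induction_on with
    | zero => simp
    | add Y Y' hY hY' => simp only [tmul_add, map_add, hY, hY']
    | tmul n y =>
      induction U using TensorProduct.induction_on with
      | zero => simp
      | add U U' hU hU' => simp only [add_tmul, tmul_add, map_add, hU, hU']
      | tmul a b => simp [hα, mul_assoc]

theorem rTensor_comp_shuffleMul {coactM : M →ₗ[k] M ⊗[k] H} {coactN : N →ₗ[k] N ⊗[k] H}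
    (X : M ⊗[k] H) (Y : N ⊗[k] H) :
    LinearMap.rTensor H (shuffleMul ∘ₗ map coactM coactN) (shuffleMul (X ⊗ₜ Y)) =
      LinearMap.rTensor H shuffleMul
        (shuffleMul (LinearMap.rTensor H coactM X ⊗ₜ LinearMap.rTensor H coactN Y)) := by
  induction X using TensorProduct.induction_on with
  | zero => simp
  | add X X' hX hX' => simp only [add_tmul, map_add, hX, hX']
  | tmul m x =>
    induction Y using TensorProduct.induction_on with
    | zero => simp
    | add Y Y' hY hY' => simp only [tmul_add, map_add, hY, hY']
    | tmul n y => simp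

variable (actM : H →ₗ[k] M →ₗ[k] M) (actN : H →ₗ[k] N →ₗ[k] N) (σ σM α β : H →ₗ[k] H)

def splitTwist :
    ((H ⊗[k] H) ⊗[k] (H ⊗[k] H)) ⊗[k] ((M ⊗[k] H) ⊗[k] (N ⊗[k] H)) →ₗ[k] (M ⊗[k] N) ⊗[k] H :=
  shuffleMul ∘ₗ map
      (ydTwist actM σM β ∘ₗ LinearMap.rTensor _ (LinearMap.rTensor H (TensorProduct.mk k H H 1)))
      (ydTwist actN σ α ∘ₗ LinearMap.rTensor _ ((TensorProduct.mk k (H ⊗[k] H) H).flip 1)) ∘ₗ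
    (tensorTensorTensorComm k _ _ _ _).toLinearMap ∘ₗ
    LinearMap.rTensor _ (TensorProduct.comm k _ _).toLinearMap

@[simp] lemma splitTwist_tmul (a b c q : H) (m : M) (x : H) (n : N) (y : H) :
    splitTwist actM actN σ σM α β
        (((a ⊗ₜ[k] b) ⊗ₜ[k] (c ⊗ₜ[k] q)) ⊗ₜ[k] ((m ⊗ₜ[k] x) ⊗ₜ[k] (n ⊗ₜ[k] y))) =
      (actM c m ⊗ₜ actN b n) ⊗ₜ (β q * x * σM 1 * (α 1 * y * σ a)) := by
  simp [splitTwist]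

end Twists

section Bialgebra

variable {k H W M N : Type*} [CommSemiring k] [Semiring H] [Bialgebra k H]
  [AddCommMonoid W] [Module k W] [AddCommMonoid M] [Module k M] [AddCommMonoid N] [Module k N]

local notation "Δ" => Coalgebra.comul (R := k) (A := H)

def comulMiddle : (H ⊗[k] H) ⊗[k] H →ₗ[k] (H ⊗[k] H) ⊗[k] (H ⊗[k] H) :=
  (TensorProduct.assoc k (H ⊗[k] H) H H).toLinearMap ∘ₗ
    LinearMap.rTensor H ((TensorProduct.assoc k H H H).symm.toLinearMap ∘ₗ LinearMap.lTensor H Δ)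

theorem comulMiddle_rTensor_comul (h : H) :
    comulMiddle (LinearMap.rTensor H Δ (Δ h)) = map Δ Δ (Δ h) :=
  LinearMap.congr_fun (show comulMiddle ∘ₗ LinearMap.rTensor H Δ ∘ₗ Δ = map Δ Δ ∘ₗ Δ by
    simp only [comulMiddle, coassoc_simps]) h

theorem ydCompat_iff {act : H →ₗ[k] W →ₗ[k] W} {coact : W →ₗ[k] W ⊗[k] H} {σ β : H →ₗ[k] H} :
    (∀ (h : H) (w : W) (s t : Finset ℕ) (a b c : ℕ → H) (w₀ : ℕ → W) (w₁ : ℕ → H),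
      LinearMap.rTensor H Δ (Δ h) = ∑ i ∈ s, (a i ⊗ₜ[k] b i) ⊗ₜ[k] c i →
      coact w = ∑ j ∈ t, w₀ j ⊗ₜ[k] w₁ j →
      coact (act h w) = ∑ i ∈ s, ∑ j ∈ t, act (b i) (w₀ j) ⊗ₜ[k] (β (c i) * w₁ j * σ (a i))) ↔
    ∀ h w, coact (act h w) = ydTwist act σ β (LinearMap.rTensor H Δ (Δ h) ⊗ₜ coact w) := by
  have expand : ∀ (s t : Finset ℕ) (a b c : ℕ → H) (w₀ : ℕ → W) (w₁ : ℕ → H),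
      ydTwist act σ β ((∑ i ∈ s, (a i ⊗ₜ[k] b i) ⊗ₜ[k] c i) ⊗ₜ ∑ j ∈ t, w₀ j ⊗ₜ[k] w₁ j) =
        ∑ i ∈ s, ∑ j ∈ t, act (b i) (w₀ j) ⊗ₜ[k] (β (c i) * w₁ j * σ (a i)) := by
    intros
    simp only [sum_tmul, tmul_sum, map_sum, ydTwist_tmul]
    exact Finset.sum_comm
  constructor
  · intro hyd h w
    obtain ⟨s, a, b, c, hh⟩ := exists_nat_sum_tmul_tmul (LinearMap.rTensor H Δ (Δ h))
    obtain ⟨t, w₀, w₁, hw⟩ := exists_nat_sum_tmul (coact w)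
    rw [hyd h w s t a b c w₀ w₁ hh hw, hh, hw, expand]
  · intro hyd h w s t a b c w₀ w₁ hh hw
    rw [hyd, hh, hw, expand]

theorem assoc_symm_lTensor_comul_shuffleMul (X : M ⊗[k] H) (Y : N ⊗[k] H) :
    (TensorProduct.assoc k (M ⊗[k] N) H H).symm
        (LinearMap.lTensor (M ⊗[k] N) Δ (shuffleMul (X ⊗ₜ Y))) =
      LinearMap.rTensor H shuffleMul (shuffleMul
        ((TensorProduct.assoc k M H H).symm (LinearMap.lTensor M Δ X) ⊗ₜ
          (TensorProduct.assoc k N H H).symm (LinearMap.lTensor N Δ Y))) := by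
  induction X using TensorProduct.induction_on with
  | zero => simp
  | add X X' hX hX' => simp only [add_tmul, map_add, hX, hX']
  | tmul m x =>
    induction Y using TensorProduct.induction_on with
    | zero => simp
    | add Y Y' hY hY' => simp only [tmul_add, map_add, hY, hY']
    | tmul n y =>
      simp only [shuffleMul_tmul, LinearMap.lTensor_tmul, Bialgebra.comul_mul]
      induction Δ x using TensorProduct.induction_on with
      | zero => simp
      | add u u' hu hu' => simp only [add_mul, tmul_add, add_tmul, map_add, hu, hu']
      | tmul a b =>
        induction Δ y using TensorProduct.induction_on with
        | zero => simp
        | add v v' hv hv' => simp only [mul_add, tmul_add, map_add, hv, hv']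
        | tmul c d => simp

theorem shuffleMul_map_coassoc {coactM : M →ₗ[k] M ⊗[k] H} {coactN : N →ₗ[k] N ⊗[k] H}
    (hM : ∀ m, LinearMap.rTensor H coactM (coactM m) =
      (TensorProduct.assoc k M H H).symm (LinearMap.lTensor M Δ (coactM m)))
    (hN : ∀ n, LinearMap.rTensor H coactN (coactN n) =
      (TensorProduct.assoc k N H H).symm (LinearMap.lTensor N Δ (coactN n))) (x : M ⊗[k] N) :
    LinearMap.rTensor H (shuffleMul ∘ₗ map coactM coactN) (shuffleMul (map coactM coactN x)) =
      (TensorProduct.assoc k (M ⊗[k] N) H H).symm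
        (LinearMap.lTensor (M ⊗[k] N) Δ (shuffleMul (map coactM coactN x))) := by
  induction x using TensorProduct.induction_on with
  | zero => simp
  | add x x' hx hx' => simp only [map_add, hx, hx']
  | tmul m n =>
    rw [map_tmul, rTensor_comp_shuffleMul, hM, hN, assoc_symm_lTensor_comul_shuffleMul]

theorem rid_lTensor_counit_shuffleMul (X : M ⊗[k] H) (Y : N ⊗[k] H) :
    TensorProduct.rid k (M ⊗[k] N) (LinearMap.lTensor (M ⊗[k] N) Coalgebra.counit
        (shuffleMul (X ⊗ₜ Y))) =
      TensorProduct.rid k M (LinearMap.lTensor M Coalgebra.counit X) ⊗ₜ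
        TensorProduct.rid k N (LinearMap.lTensor N Coalgebra.counit Y) := by
  induction X using TensorProduct.induction_on with
  | zero => simp
  | add X X' hX hX' => simp only [add_tmul, map_add, hX, hX']
  | tmul m x =>
    induction Y using TensorProduct.induction_on with
    | zero => simp
    | add Y Y' hY hY' => simp only [tmul_add, map_add, hY, hY']
    | tmul n y =>
      simp only [shuffleMul_tmul, LinearMap.lTensor_tmul, rid_tmul, Bialgebra.counit_mul]
      rw [smul_tmul_smul]

theorem shuffleMul_map_counit {coactM : M →ₗ[k] M ⊗[k] H} {coactN : N →ₗ[k] N ⊗[k] H}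
    (hM : ∀ m, TensorProduct.rid k M (LinearMap.lTensor M Coalgebra.counit (coactM m)) = m)
    (hN : ∀ n, TensorProduct.rid k N (LinearMap.lTensor N Coalgebra.counit (coactN n)) = n)
    (x : M ⊗[k] N) :
    TensorProduct.rid k (M ⊗[k] N)
      (LinearMap.lTensor (M ⊗[k] N) Coalgebra.counit (shuffleMul (map coactM coactN x))) = x := by
  induction x using TensorProduct.induction_on with
  | zero => simp
  | add x x' hx hx' => simp only [map_add, hx, hx']
  | tmul m n => rw [map_tmul, rid_lTensor_counit_shuffleMul, hM, hN]

variable {actM : H →ₗ[k] M →ₗ[k] M} {coactM : M →ₗ[k] M ⊗[k] H}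
  {actN : H →ₗ[k] N →ₗ[k] N} {coactN : N →ₗ[k] N ⊗[k] H}
  {act : H →ₗ[k] M ⊗[k] N →ₗ[k] M ⊗[k] N} {σ σM α β : H →ₗ[k] H}

theorem tensorAct_one
    (hact : ∀ h m n,
      act h (m ⊗ₜ n) = map (actM.flip m) (actN.flip n) (TensorProduct.comm k H H (Δ h)))
    (hM : ∀ m, actM 1 m = m) (hN : ∀ n, actN 1 n = n) (x : M ⊗[k] N) : act 1 x = x := by
  induction x using TensorProduct.induction_on with
  | zero => simp
  | add x x' hx hx' => rw [map_add, hx, hx']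
  | tmul m n => simp [hact, Algebra.TensorProduct.one_def, hM, hN]

theorem tensorAct_mul
    (hact : ∀ h m n,
      act h (m ⊗ₜ n) = map (actM.flip m) (actN.flip n) (TensorProduct.comm k H H (Δ h)))
    (hM : ∀ g h m, actM (g * h) m = actM g (actM h m))
    (hN : ∀ g h n, actN (g * h) n = actN g (actN h n)) (g h : H) (x : M ⊗[k] N) :
    act (g * h) x = act g (act h x) := by
  induction x using TensorProduct.induction_on with
  | zero => simp
  | add x x' hx hx' => rw [map_add, map_add, map_add, hx, hx']
  | tmul m n =>
    rw [hact, Bialgebra.comul_mul, hact]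
    induction Δ h using TensorProduct.induction_on with
    | zero => simp
    | add u u' hu hu' => simp only [mul_add, map_add, hu, hu']
    | tmul p q =>
      simp only [TensorProduct.comm_tmul, map_tmul, LinearMap.flip_apply, hact]
      induction Δ g using TensorProduct.induction_on with
      | zero => simp
      | add u u' hu hu' => simp only [add_mul, map_add, hu, hu']
      | tmul a b => simp [hM, hN]

theorem ydTwist_shuffleMul
    (hact : ∀ h m n,
      act h (m ⊗ₜ n) = map (actM.flip m) (actN.flip n) (TensorProduct.comm k H H (Δ h)))
    (hα1 : α 1 = 1) (hσM1 : σM 1 = 1) (Z : (H ⊗[k] H) ⊗[k] H) (X : M ⊗[k] H) (Y : N ⊗[k] H) :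
    ydTwist act σ β (Z ⊗ₜ shuffleMul (X ⊗ₜ Y)) =
      splitTwist actM actN σ σM α β (comulMiddle Z ⊗ₜ (X ⊗ₜ Y)) := by
  induction X using TensorProduct.induction_on with
  | zero => simp
  | add X X' hX hX' => simp only [add_tmul, tmul_add, map_add, hX, hX']
  | tmul m x =>
    induction Y using TensorProduct.induction_on with
    | zero => simp
    | add Y Y' hY hY' => simp only [tmul_add, map_add, hY, hY']
    | tmul n y =>
      induction Z using TensorProduct.induction_on with
      | zero => simp
      | add Z Z' hZ hZ' => simp only [add_tmul, map_add, hZ, hZ']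
      | tmul ab q =>
        induction ab using TensorProduct.induction_on with
        | zero => simp
        | add ab ab' h h' => simp only [add_tmul, map_add, h, h']
        | tmul a b =>
          simp only [comulMiddle, LinearMap.comp_apply, LinearMap.rTensor_tmul,
            LinearMap.lTensor_tmul, LinearEquiv.coe_coe, shuffleMul_tmul, ydTwist_tmul, hact]
          induction Δ b using TensorProduct.induction_on with
          | zero => simp
          | add v v' hv hv' => simp only [map_add, add_tmul, tmul_add, hv, hv']
          | tmul b₁ b₂ => simp [hα1, hσM1, mul_assoc]

theorem shuffleMul_map_coact_act_tmul
    (hact : ∀ h m n,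
      act h (m ⊗ₜ n) = map (actM.flip m) (actN.flip n) (TensorProduct.comm k H H (Δ h)))
    (hydN : ∀ h n, coactN (actN h n) = ydTwist actN σ α (LinearMap.rTensor H Δ (Δ h) ⊗ₜ coactN n))
    (hPM : ∀ y m, mulRightOf α (LinearMap.lTensor H (coactM ∘ₗ actM.flip m) (Δ y)) =
      ydTwist actM σM β (LinearMap.rTensor H (TensorProduct.mk k H H 1) (Δ y) ⊗ₜ coactM m))
    (hα1 : α 1 = 1) (hσM1 : σM 1 = 1) (h : H) (m : M) (n : N) :
    shuffleMul (map coactM coactN (act h (m ⊗ₜ n))) =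
      ydTwist act σ β (LinearMap.rTensor H Δ (Δ h) ⊗ₜ shuffleMul (coactM m ⊗ₜ coactN n)) := by
  -- `K (x ⊗ (c ⊗ q)) = (q·m)₍₀₎ ⊗ x₂·n₍₀₎ ⊗ (q·m)₍₁₎ α(c) α(1) n₍₁₎ σ(x₁)`
  set K : H ⊗[k] (H ⊗[k] H) →ₗ[k] (M ⊗[k] N) ⊗[k] H :=
    shuffleMul ∘ₗ (TensorProduct.comm k _ _).toLinearMap ∘ₗ map
      (ydTwist actN σ α ∘ₗ (TensorProduct.mk k _ _).flip (coactN n) ∘ₗ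
        (TensorProduct.mk k _ _).flip 1 ∘ₗ Δ)
      (mulRightOf α ∘ₗ LinearMap.lTensor H (coactM ∘ₗ actM.flip m)) with hK
  have expandN : ∀ u : H ⊗[k] H,
      shuffleMul (map coactM coactN
          (map (actM.flip m) (actN.flip n) (TensorProduct.comm k H H u))) =
        K (TensorProduct.assoc k H H H (LinearMap.rTensor H Δ u)) := by
    intro u
    induction u using TensorProduct.induction_on with
    | zero => simp
    | add u u' hu hu' => simp only [map_add, hu, hu']
    | tmul p q =>
      simp only [TensorProduct.comm_tmul, map_tmul, LinearMap.flip_apply, hydN,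
        LinearMap.rTensor_tmul]
      induction Δ p using TensorProduct.induction_on with
      | zero => simp
      | add v v' hv hv' => simp only [map_add, add_tmul, tmul_add, hv, hv']
      | tmul x c =>
        rw [LinearMap.rTensor_tmul, shuffleMul_ydTwist hα1, TensorProduct.assoc_tmul]
        simp [hK]
  have applyM : ∀ v : H ⊗[k] H, K (LinearMap.lTensor H Δ v) =
      splitTwist actM actN σ σM α β (map Δ Δ v ⊗ₜ (coactM m ⊗ₜ coactN n)) := by
    intro v
    induction v using TensorProduct.induction_on with
    | zero => simp
    | add v v' hv hv' => simp only [map_add, add_tmul, hv, hv']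
    | tmul x y => simp [hK, hPM, splitTwist]
  rw [ydTwist_shuffleMul hact hα1 hσM1, hact, expandN, Coalgebra.coassoc_apply, applyM,
    comulMiddle_rTensor_comul]

theorem shuffleMul_map_coact_act
    (hact : ∀ h m n,
      act h (m ⊗ₜ n) = map (actM.flip m) (actN.flip n) (TensorProduct.comm k H H (Δ h)))
    (hydN : ∀ h n, coactN (actN h n) = ydTwist actN σ α (LinearMap.rTensor H Δ (Δ h) ⊗ₜ coactN n))
    (hPM : ∀ y m, mulRightOf α (LinearMap.lTensor H (coactM ∘ₗ actM.flip m) (Δ y)) =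
      ydTwist actM σM β (LinearMap.rTensor H (TensorProduct.mk k H H 1) (Δ y) ⊗ₜ coactM m))
    (hα1 : α 1 = 1) (hσM1 : σM 1 = 1) (h : H) (x : M ⊗[k] N) :
    shuffleMul (map coactM coactN (act h x)) =
      ydTwist act σ β (LinearMap.rTensor H Δ (Δ h) ⊗ₜ shuffleMul (map coactM coactN x)) := by
  induction x using TensorProduct.induction_on with
  | zero => simp
  | add x x' hx hx' => simp only [map_add, tmul_add, hx, hx']
  | tmul m n => rw [map_tmul, shuffleMul_map_coact_act_tmul hact hydN hPM hα1 hσM1]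

end Bialgebra

section Hopf

variable {k H W : Type*} [CommSemiring k] [Semiring H] [HopfAlgebra k H]
  [AddCommMonoid W] [Module k W]

local notation "Δ" => Coalgebra.comul (R := k) (A := H)

def antipodeMulFirst : H ⊗[k] ((H ⊗[k] H) ⊗[k] H) →ₗ[k] (H ⊗[k] H) ⊗[k] H :=
  LinearMap.rTensor H (LinearMap.rTensor H (LinearMap.mul' k H ∘ₗ (antipode k).rTensor H)) ∘ₗ
    LinearMap.rTensor H (TensorProduct.assoc k H H H).symm.toLinearMap ∘ₗ
    (TensorProduct.assoc k H (H ⊗[k] H) H).symm.toLinearMap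

@[simp] lemma antipodeMulFirst_tmul (a b c d : H) :
    antipodeMulFirst (c ⊗ₜ[k] ((a ⊗ₜ[k] b) ⊗ₜ[k] d)) = ((antipode k c * a) ⊗ₜ b) ⊗ₜ d := by
  simp [antipodeMulFirst]

theorem antipodeMulFirst_comp_lTensor_comul :
    antipodeMulFirst ∘ₗ LinearMap.lTensor H (LinearMap.rTensor H Δ ∘ₗ Δ) ∘ₗ Δ =
      LinearMap.rTensor H (TensorProduct.mk k H H 1) ∘ₗ Δ := by
  have coassoc : LinearMap.rTensor H (TensorProduct.assoc k H H H).symm.toLinearMap ∘ₗ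
      (TensorProduct.assoc k H (H ⊗[k] H) H).symm.toLinearMap ∘ₗ
      LinearMap.lTensor H (LinearMap.rTensor H Δ ∘ₗ Δ) ∘ₗ Δ =
      LinearMap.rTensor H (LinearMap.rTensor H Δ) ∘ₗ LinearMap.rTensor H Δ ∘ₗ Δ := by
    simp only [coassoc_simps]
  have antipode : (LinearMap.mul' k H ∘ₗ (antipode k).rTensor H) ∘ₗ Δ =
      Algebra.linearMap k H ∘ₗ Coalgebra.counit := by
    rw [LinearMap.comp_assoc, mul_antipode_rTensor_comul]
  have counit : LinearMap.rTensor H (Algebra.linearMap k H ∘ₗ Coalgebra.counit) ∘ₗ Δ =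
      TensorProduct.mk k H H 1 := by
    rw [LinearMap.rTensor_comp, LinearMap.comp_assoc, Coalgebra.rTensor_counit_comp_comul]
    ext; simp
  rw [antipodeMulFirst, LinearMap.comp_assoc, LinearMap.comp_assoc, coassoc]
  simp only [← LinearMap.comp_assoc, ← LinearMap.rTensor_comp]
  rw [antipode, counit]

theorem mulRightOf_ydTwist {act : H →ₗ[k] W →ₗ[k] W} {σ α β : H →ₗ[k] H}
    (hσ : ∀ a c, σ (antipode k c * a) = σ a * α c) (c : H) (X : (H ⊗[k] H) ⊗[k] H)
    (Y : W ⊗[k] H) :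
    mulRightOf α (c ⊗ₜ ydTwist act σ β (X ⊗ₜ Y)) =
      ydTwist act σ β (antipodeMulFirst (c ⊗ₜ X) ⊗ₜ Y) := by
  induction Y using TensorProduct.induction_on with
  | zero => simp
  | add Y Y' hY hY' => simp only [tmul_add, map_add, hY, hY']
  | tmul w x =>
    induction X using TensorProduct.induction_on with
    | zero => simp
    | add X X' hX hX' => simp only [add_tmul, tmul_add, map_add, hX, hX']
    | tmul ab d =>
      induction ab using TensorProduct.induction_on with
      | zero => simp
      | add ab ab' h h' => simp only [add_tmul, tmul_add, map_add, h, h']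
      | tmul a b => simp [hσ, mul_assoc]

/-- The antipode-free form of the compatibility condition:
`(y₂·w)₍₀₎ ⊗ (y₂·w)₍₁₎ α(y₁) = y₁·w₍₀₎ ⊗ β(y₂) w₍₁₎ σ(1)`. -/
theorem mulRightOf_lTensor_coact_act {act : H →ₗ[k] W →ₗ[k] W} {coact : W →ₗ[k] W ⊗[k] H}
    {σ α β : H →ₗ[k] H}
    (hyd : ∀ h w, coact (act h w) = ydTwist act σ β (LinearMap.rTensor H Δ (Δ h) ⊗ₜ coact w))
    (hσ : ∀ a c, σ (antipode k c * a) = σ a * α c) (y : H) (w : W) :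
    mulRightOf α (LinearMap.lTensor H (coact ∘ₗ act.flip w) (Δ y)) =
      ydTwist act σ β (LinearMap.rTensor H (TensorProduct.mk k H H 1) (Δ y) ⊗ₜ coact w) := by
  have hcoact : coact ∘ₗ act.flip w =
      ydTwist act σ β ∘ₗ (TensorProduct.mk k _ _).flip (coact w) ∘ₗ
        LinearMap.rTensor H Δ ∘ₗ Δ :=
    LinearMap.ext fun h => hyd h w
  have collapse : ∀ u : H ⊗[k] H,
      mulRightOf α (LinearMap.lTensor H (coact ∘ₗ act.flip w) u) =
        ydTwist act σ β (antipodeMulFirst (LinearMap.lTensor H (LinearMap.rTensor H Δ ∘ₗ Δ) u)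
          ⊗ₜ coact w) := by
    intro u
    induction u using TensorProduct.induction_on with
    | zero => simp
    | add u u' hu hu' => simp only [map_add, add_tmul, hu, hu']
    | tmul c q =>
      simp only [hcoact, LinearMap.lTensor_tmul, LinearMap.comp_apply, LinearMap.flip_apply,
        TensorProduct.mk_apply]
      exact mulRightOf_ydTwist hσ c _ _
  rw [collapse, ← LinearMap.comp_apply (g := Δ), ← LinearMap.comp_apply (f := antipodeMulFirst),
    antipodeMulFirst_comp_lTensor_comul, LinearMap.comp_apply]

end Hopf

section Characterizations

variable {k H M N : Type} [Field k] [Ring H] [HopfAlgebra k H]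
  [AddCommGroup M] [Module k M] [AddCommGroup N] [Module k N]

local notation "Δ" => Coalgebra.comul (R := k) (A := H)

def antipodeEquiv {Sinv : H → H} (hS : IsAntipodeInv k H Sinv) : H ≃ₗ[k] H :=
  { antipode k with invFun := Sinv, left_inv := hS.2, right_inv := hS.1 }

@[simp] lemma antipodeEquiv_symm_apply {Sinv : H → H} (hS : IsAntipodeInv k H Sinv) (h : H) :
    (antipodeEquiv hS).symm h = Sinv h :=
  rfl

theorem IsAntipodeInv.apply_antipode_mul {Sinv : H → H} (hS : IsAntipodeInv k H Sinv)
    (a c : H) : Sinv (antipode k c * a) = Sinv a * c := by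
  rw [← hS.1 a, ← antipode_mul_antidistrib, hS.2, hS.1]

theorem IsAntipodeInv.apply_one {Sinv : H → H} (hS : IsAntipodeInv k H Sinv) : Sinv 1 = 1 := by
  simpa using hS.2 1

theorem TensorActCharTwo.apply_tmul {actM : H →ₗ[k] M →ₗ[k] M} {actN : H →ₗ[k] N →ₗ[k] N}
    {act : H →ₗ[k] M ⊗[k] N →ₗ[k] M ⊗[k] N} (hact : TensorActCharTwo k H actM actN act)
    (h : H) (m : M) (n : N) :
    act h (m ⊗ₜ n) = map (actM.flip m) (actN.flip n) (TensorProduct.comm k H H (Δ h)) := by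
  obtain ⟨s, p, q, hh⟩ := exists_nat_sum_tmul (Δ h)
  rw [hact h m n s p q hh, hh]
  simp [map_sum]

theorem TensorCoactCharTwo.eq_shuffleMul {coactM : M →ₗ[k] M ⊗[k] H}
    {coactN : N →ₗ[k] N ⊗[k] H} {coact : M ⊗[k] N →ₗ[k] (M ⊗[k] N) ⊗[k] H}
    (hcoact : TensorCoactCharTwo k H coactM coactN coact) :
    coact = shuffleMul ∘ₗ map coactM coactN := by
  refine TensorProduct.ext' fun m n => ?_
  obtain ⟨s, m₀, m₁, hm⟩ := exists_nat_sum_tmul (coactM m)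
  obtain ⟨t, n₀, n₁, hn⟩ := exists_nat_sum_tmul (coactN n)
  simp only [hcoact m n s t m₀ m₁ n₀ n₁ hm hn, LinearMap.comp_apply, map_tmul, hm, hn, sum_tmul,
    tmul_sum, map_sum, shuffleMul_tmul]
  exact Finset.sum_comm

end Characterizations

end GYD

theorem statement_1_general
    (k H : Type) [Field k] [Ring H] [HopfAlgebra k H]
    (Sinv : H → H) (hS : GYD.IsAntipodeInv k H Sinv)
    (α β γ : H ≃ₗ[k] H)
    (hα : GYD.IsHopfAut k H α)
    (M N : Type) [AddCommGroup M] [Module k M] [AddCommGroup N] [Module k N]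
    (actM : H →ₗ[k] M →ₗ[k] M) (coactM : M →ₗ[k] M ⊗[k] H)
    (actN : H →ₗ[k] N →ₗ[k] N) (coactN : N →ₗ[k] N ⊗[k] H)
    (hM : GYD.IsYD k H Sinv ⇑α ⇑β actM coactM)
    (hN : GYD.IsYD k H Sinv ⇑γ ⇑α actN coactN)
    (act₂ : H →ₗ[k] (M ⊗[k] N) →ₗ[k] (M ⊗[k] N))
    (coact₂ : M ⊗[k] N →ₗ[k] (M ⊗[k] N) ⊗[k] H)
    (hact : GYD.TensorActCharTwo k H actM actN act₂)
    (hcoact : GYD.TensorCoactCharTwo k H coactM coactN coact₂) :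
    GYD.IsYD k H Sinv ⇑γ ⇑β act₂ coact₂ := by
  obtain ⟨hM1, hM2, hM3, hM4, hM5⟩ := hM
  obtain ⟨hN1, hN2, hN3, hN4, hN5⟩ := hN
  obtain rfl := hcoact.eq_shuffleMul
  have hact₂ := hact.apply_tmul
  let Sinvₗ := (GYD.antipodeEquiv hS).symm.toLinearMap
  have hydM := (GYD.ydCompat_iff (σ := α.toLinearMap ∘ₗ Sinvₗ) (β := β.toLinearMap)).mp hM5
  have hydN := (GYD.ydCompat_iff (σ := γ.toLinearMap ∘ₗ Sinvₗ) (β := α.toLinearMap)).mp hN5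
  have hPM := GYD.mulRightOf_lTensor_coact_act hydM (α := α.toLinearMap) fun a c => by
    simp [Sinvₗ, hS.apply_antipode_mul, hα.1]
  refine ⟨GYD.tensorAct_one hact₂ hM1 hN1, GYD.tensorAct_mul hact₂ hM2 hN2,
    GYD.shuffleMul_map_coassoc hM3 hN3, GYD.shuffleMul_map_counit hM4 hN4,
    (GYD.ydCompat_iff (σ := γ.toLinearMap ∘ₗ Sinvₗ) (β := β.toLinearMap)).mpr fun h x => ?_⟩
  exact GYD.shuffleMul_map_coact_act hact₂ hydN hPM hα.2.1
    (by simp [Sinvₗ, hS.apply_one, hα.2.1]) h x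

theorem statement_1
    (k H : Type) [Field k] [Ring H] [HopfAlgebra k H]
    (Sinv : H → H) (hS : GYD.IsAntipodeInv k H Sinv)
    (α β γ : H ≃ₗ[k] H)
    (hα : GYD.IsHopfAut k H α) (hβ : GYD.IsHopfAut k H β) (hγ : GYD.IsHopfAut k H γ)
    (M N : Type) [AddCommGroup M] [Module k M] [AddCommGroup N] [Module k N]
    (actM : H →ₗ[k] M →ₗ[k] M) (coactM : M →ₗ[k] M ⊗[k] H)
    (actN : H →ₗ[k] N →ₗ[k] N) (coactN : N →ₗ[k] N ⊗[k] H)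
    (hM : GYD.IsYD k H Sinv ⇑α ⇑β actM coactM)
    (hN : GYD.IsYD k H Sinv ⇑γ ⇑α actN coactN)
    (act₂ : H →ₗ[k] (M ⊗[k] N) →ₗ[k] (M ⊗[k] N))
    (coact₂ : M ⊗[k] N →ₗ[k] (M ⊗[k] N) ⊗[k] H)
    (hact : GYD.TensorActCharTwo k H actM actN act₂)
    (hcoact : GYD.TensorCoactCharTwo k H coactM coactN coact₂) :
    GYD.IsYD k H Sinv ⇑γ ⇑β act₂ coact₂ :=
  statement_1_general k H Sinv hS α β γ hα M N actM coactM actN coactN hM hN act₂ coact₂ hact hcoact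
end
end

section
/- Let α, β, γ ∈ Aut_Hopf(H). If M is an (αβ,γβ)-Yetter-Drinfeld module, then F(M), defined as the same vector space M with left H-action h → m = β⁻¹(h)·m and unchanged right H-coaction, is an (α,γ)-Yetter-Drinfeld module; if N is an (α,γ)-Yetter-Drinfeld module, then G(N), defined as the same vector space N with left H-action h ⇀ n = β(h)·n and unchanged right H-coaction, is an (αβ,γβ)-Yetter-Drinfeld module; and F and G, both acting as identities on morphisms, are mutually inverse functors, so the categories _H𝒴𝒟^H(αβ,γβ) and _H𝒴𝒟^H(α,γ) are isomorphic. -/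
open TensorProduct

noncomputable section

/-!
Twisting the action of a Yetter-Drinfeld module by a bialgebra endomorphism `φ` of `H` turns an
`(α, γ)`-Yetter-Drinfeld module into an `(α ∘ φ, γ ∘ φ)`-one: `φ` is multiplicative, carries the
iterated coproduct of `h` to that of `φ h`, and commutes with the antipode, hence with its inverse.
`G` is the twist along `β` and `F` the twist along the Hopf automorphism `β⁻¹`; the two twists
undo each other, and since `β` is bijective a linear map intertwines two actions iff it
intertwines their twists.
-/

open Coalgebra HopfAlgebra WithConv

/-- Both sides are convolution inverses of `f`. -/
theorem BialgHom.map_antipode {R A B : Type*} [CommSemiring R] [Semiring A] [Semiring B]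
    [HopfAlgebra R A] [HopfAlgebra R B] (f : A →ₐc[R] B) (a : A) :
    f (antipode R a) = antipode R (f a) := by
  have hleft : toConv ((f : A →ₗ[R] B) ∘ₗ antipode R) * toConv (f : A →ₗ[R] B) = 1 :=
    ofConv_injective <| by
      have := LinearMap.algHom_comp_convMul_distrib (f : A →ₐ[R] B) (toConv (antipode R))
        (toConv LinearMap.id)
      rw [LinearMap.antipode_mul_id, LinearMap.algHom_comp_convOne] at this
      exact this.symm
  have hright : toConv (f : A →ₗ[R] B) * toConv (antipode R ∘ₗ (f : A →ₗ[R] B)) = 1 :=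
    ofConv_injective <| by
      have := LinearMap.convMul_comp_coalgHom_distrib (toConv LinearMap.id) (toConv (antipode R))
        (f : A →ₗc[R] B)
      rw [LinearMap.id_mul_antipode, LinearMap.convOne_comp_coalgHom] at this
      exact this.symm
  exact congr($(left_inv_eq_right_inv hleft hright) a)

theorem CoalgHomClass.rTensor_comul_comul_apply {R A B F : Type*} [CommSemiring R]
    [AddCommMonoid A] [Module R A] [Coalgebra R A] [AddCommMonoid B] [Module R B] [Coalgebra R B]
    [FunLike F A B] [CoalgHomClass F R A B] (φ : F) (a : A) :
    (comul (R := R) (A := B)).rTensor B (comul (φ a))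
      = TensorProduct.map (TensorProduct.map (φ : A →ₗ[R] B) φ) φ
          ((comul (R := R) (A := A)).rTensor A (comul a)) := by
  rw [← CoalgHomClass.map_comp_comul_apply]
  induction comul (R := R) a with
  | zero => simp
  | tmul x y => simp [CoalgHomClass.map_comp_comul_apply]
  | add x y hx hy => simp only [map_add, hx, hy]

namespace GYD

variable {k H : Type} [Field k] [Ring H] [HopfAlgebra k H]

theorem IsAntipodeInv.map_bialgHom {Sinv : H → H} (hS : IsAntipodeInv k H Sinv)
    (φ : H →ₐc[k] H) (h : H) : Sinv (φ h) = φ (Sinv h) := by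
  conv_lhs => rw [← hS.1 h, BialgHom.map_antipode, hS.2]

theorem IsYD.comp_bialgHom {Sinv α γ : H → H} (hS : IsAntipodeInv k H Sinv)
    (φ : H →ₐc[k] H) {M : Type} [AddCommGroup M] [Module k M]
    {act : H →ₗ[k] M →ₗ[k] M} {coact : M →ₗ[k] M ⊗[k] H}
    (hM : IsYD k H Sinv α γ act coact) :
    IsYD k H Sinv (α ∘ φ) (γ ∘ φ) (act ∘ₗ (φ : H →ₗ[k] H)) coact := by
  obtain ⟨one_act, mul_act, coassoc, counit, yd⟩ := hM
  refine ⟨fun m => ?_, fun g h m => ?_, coassoc, counit, ?_⟩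
  · simpa using one_act m
  · simpa using mul_act (φ g) (φ h) m
  · intro h m s t a b c m₀ m₁ hh hm
    have := yd (φ h) m s t (φ ∘ a) (φ ∘ b) (φ ∘ c) m₀ m₁
      (by rw [CoalgHomClass.rTensor_comul_comul_apply, hh]; simp) hm
    simpa [hS.map_bialgHom] using this

def IsHopfAut.toBialgHom {φ : H ≃ₗ[k] H} (hφ : IsHopfAut k H φ) : H →ₐc[k] H where
  toLinearMap := φ
  map_one' := hφ.2.1
  map_mul' := hφ.1
  counit_comp := LinearMap.ext hφ.2.2.2
  map_comp_comul := LinearMap.ext fun h => (hφ.2.2.1 h).symm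

@[simp]
theorem IsHopfAut.coe_toBialgHom {φ : H ≃ₗ[k] H} (hφ : IsHopfAut k H φ) : ⇑hφ.toBialgHom = φ :=
  rfl

theorem IsHopfAut.symm {φ : H ≃ₗ[k] H} (hφ : IsHopfAut k H φ) : IsHopfAut k H φ.symm := by
  obtain ⟨map_mul, map_one, comul_map, counit_map⟩ := hφ
  refine ⟨fun x y => φ.injective ?_, φ.injective ?_, fun h => ?_, fun h => ?_⟩
  · simp [map_mul]
  · simp [map_one]
  · change _ = TensorProduct.congr φ.symm φ.symm (comul h)
    rw [← TensorProduct.congr_symm, LinearEquiv.eq_symm_apply]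
    exact (comul_map (φ.symm h)).symm.trans (by rw [φ.apply_symm_apply])
  · rw [← counit_map, φ.apply_symm_apply]

end GYD

theorem statement_2_general
    (k H : Type) [Field k] [Ring H] [HopfAlgebra k H]
    (Sinv : H → H) (hS : GYD.IsAntipodeInv k H Sinv)
    (α β γ : H ≃ₗ[k] H)
    (hβ : GYD.IsHopfAut k H β) :
    (∀ (M : Type) [AddCommGroup M] [Module k M]
        (act : H →ₗ[k] M →ₗ[k] M) (coact : M →ₗ[k] M ⊗[k] H),
        GYD.IsYD k H Sinv (⇑α ∘ ⇑β) (⇑γ ∘ ⇑β) act coact →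
        GYD.IsYD k H Sinv ⇑α ⇑γ (act ∘ₗ β.symm.toLinearMap) coact) ∧
    (∀ (N : Type) [AddCommGroup N] [Module k N]
        (act : H →ₗ[k] N →ₗ[k] N) (coact : N →ₗ[k] N ⊗[k] H),
        GYD.IsYD k H Sinv ⇑α ⇑γ act coact →
        GYD.IsYD k H Sinv (⇑α ∘ ⇑β) (⇑γ ∘ ⇑β) (act ∘ₗ β.toLinearMap) coact) ∧
    (∀ (M : Type) [AddCommGroup M] [Module k M] (act : H →ₗ[k] M →ₗ[k] M),
        (act ∘ₗ β.symm.toLinearMap) ∘ₗ β.toLinearMap = act ∧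
        (act ∘ₗ β.toLinearMap) ∘ₗ β.symm.toLinearMap = act) ∧
    (∀ (M N : Type) [AddCommGroup M] [Module k M] [AddCommGroup N] [Module k N]
        (actM : H →ₗ[k] M →ₗ[k] M) (actN : H →ₗ[k] N →ₗ[k] N) (f : M →ₗ[k] N),
        (∀ (h : H) (m : M), f (actM h m) = actN h (f m)) ↔
        (∀ (h : H) (m : M), f ((actM ∘ₗ β.symm.toLinearMap) h m)
            = (actN ∘ₗ β.symm.toLinearMap) h (f m))) := by
  refine ⟨fun M _ _ act coact hM => ?_, fun N _ _ act coact hN => ?_,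
    fun M _ _ act => ⟨by ext; simp, by ext; simp⟩, fun M N _ _ _ _ actM actN f => ?_⟩
  · have hF := hM.comp_bialgHom hS hβ.symm.toBialgHom
    rwa [GYD.IsHopfAut.coe_toBialgHom, (β.comp_symm_eq α (α ∘ β)).2 rfl,
      (β.comp_symm_eq γ (γ ∘ β)).2 rfl] at hF
  · exact hN.comp_bialgHom hS hβ.toBialgHom
  · exact β.symm.surjective.forall (p := fun h => ∀ m, f (actM h m) = actN h (f m))

theorem statement_2
    (k H : Type) [Field k] [Ring H] [HopfAlgebra k H]
    (Sinv : H → H) (hS : GYD.IsAntipodeInv k H Sinv)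
    (α β γ : H ≃ₗ[k] H)
    (hα : GYD.IsHopfAut k H α) (hβ : GYD.IsHopfAut k H β) (hγ : GYD.IsHopfAut k H γ) :
    (∀ (M : Type) [AddCommGroup M] [Module k M]
        (act : H →ₗ[k] M →ₗ[k] M) (coact : M →ₗ[k] M ⊗[k] H),
        GYD.IsYD k H Sinv (⇑α ∘ ⇑β) (⇑γ ∘ ⇑β) act coact →
        GYD.IsYD k H Sinv ⇑α ⇑γ (act ∘ₗ β.symm.toLinearMap) coact) ∧
    (∀ (N : Type) [AddCommGroup N] [Module k N]
        (act : H →ₗ[k] N →ₗ[k] N) (coact : N →ₗ[k] N ⊗[k] H),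
        GYD.IsYD k H Sinv ⇑α ⇑γ act coact →
        GYD.IsYD k H Sinv (⇑α ∘ ⇑β) (⇑γ ∘ ⇑β) (act ∘ₗ β.toLinearMap) coact) ∧
    (∀ (M : Type) [AddCommGroup M] [Module k M] (act : H →ₗ[k] M →ₗ[k] M),
        (act ∘ₗ β.symm.toLinearMap) ∘ₗ β.toLinearMap = act ∧
        (act ∘ₗ β.toLinearMap) ∘ₗ β.symm.toLinearMap = act) ∧
    (∀ (M N : Type) [AddCommGroup M] [Module k M] [AddCommGroup N] [Module k N]
        (actM : H →ₗ[k] M →ₗ[k] M) (actN : H →ₗ[k] N →ₗ[k] N) (f : M →ₗ[k] N),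
        (∀ (h : H) (m : M), f (actM h m) = actN h (f m)) ↔
        (∀ (h : H) (m : M), f ((actM ∘ₗ β.symm.toLinearMap) h m)
            = (actN ∘ₗ β.symm.toLinearMap) h (f m))) :=
  statement_2_general k H Sinv hS α β γ hβ
end
end

section
/- Let α, β, γ ∈ Aut_Hopf(H), let M be an (α,β)-Yetter-Drinfeld module and N a (β,γ)-Yetter-Drinfeld module. Then M ⊗̃ N = F(M ⊗̂ N): the (α,γ)-Yetter-Drinfeld module M ⊗̃ N (that is, M ⊗ N with left H-action h·(m⊗n) = h₁·m ⊗ h₂·n and right H-coaction m⊗n ↦ (m₍₀₎ ⊗ n₍₀₎) ⊗ n₍₁₎m₍₁₎) coincides, as a module and as a comodule, with the image under the functor F from _H𝒴𝒟^H(αβ,γβ) to _H𝒴𝒟^H(α,γ) of the (αβ,γβ)-Yetter-Drinfeld module M ⊗̂ N. -/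
open TensorProduct

noncomputable section

/-! Action and coaction on `M ⊗ N` are determined on pure tensors by their Sweedler formulas,
and since `β⁻¹` is a coalgebra map, `β((β⁻¹h)₁) ⊗ β((β⁻¹h)₂) = h₁ ⊗ h₂`: both sides of each
equation are given by the same formula. -/

theorem TensorProduct.exists_finset_nat_sum_tmul_eq {R M N : Type*} [CommSemiring R]
    [AddCommMonoid M] [Module R M] [AddCommMonoid N] [Module R N] (x : M ⊗[R] N) :
    ∃ (s : Finset ℕ) (p : ℕ → M) (q : ℕ → N), x = ∑ i ∈ s, p i ⊗ₜ[R] q i := by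
  obtain ⟨n, m, m', rfl⟩ := TensorProduct.exists_sum_tmul_eq x
  refine ⟨Finset.range n, fun i => if h : i < n then m ⟨i, h⟩ else 0,
    fun i => if h : i < n then m' ⟨i, h⟩ else 0, ?_⟩
  rw [← Fin.sum_univ_eq_sum_range]
  simp

theorem Coalgebra.comul_symm_apply {R C : Type*} [CommSemiring R] [AddCommMonoid C]
    [Module R C] [Coalgebra R C] {φ : C ≃ₗ[R] C}
    (hφ : ∀ c, comul (R := R) (φ c)
      = _root_.TensorProduct.map φ.toLinearMap φ.toLinearMap (comul c))
    (c : C) :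
    comul (R := R) (φ.symm c)
      = _root_.TensorProduct.map φ.symm.toLinearMap φ.symm.toLinearMap (comul c) := by
  apply (TensorProduct.congr φ φ).injective
  rw [← LinearEquiv.coe_toLinearMap, TensorProduct.toLinearMap_congr, ← hφ,
    φ.apply_symm_apply, ← LinearMap.comp_apply, ← TensorProduct.map_comp]
  simp

namespace GYD

variable {k H : Type} [Field k] [Ring H] [HopfAlgebra k H] {M N : Type}
  [AddCommGroup M] [Module k M] [AddCommGroup N] [Module k N]

theorem TensorActChar.eq {θ₁ θ₂ : H → H} {actM : H →ₗ[k] M →ₗ[k] M}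
    {actN : H →ₗ[k] N →ₗ[k] N} {act act' : H →ₗ[k] (M ⊗[k] N) →ₗ[k] (M ⊗[k] N)}
    (hact : TensorActChar k H θ₁ θ₂ actM actN act)
    (hact' : TensorActChar k H θ₁ θ₂ actM actN act') :
    act = act' := by
  refine LinearMap.ext fun h => TensorProduct.ext' fun m n => ?_
  obtain ⟨s, p, q, hpq⟩ :=
    TensorProduct.exists_finset_nat_sum_tmul_eq (Coalgebra.comul (R := k) h)
  rw [hact h m n s p q hpq, hact' h m n s p q hpq]

theorem TensorCoactChar.eq {coactM : M →ₗ[k] M ⊗[k] H} {coactN : N →ₗ[k] N ⊗[k] H}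
    {coact coact' : M ⊗[k] N →ₗ[k] (M ⊗[k] N) ⊗[k] H}
    (hcoact : TensorCoactChar k H coactM coactN coact)
    (hcoact' : TensorCoactChar k H coactM coactN coact') :
    coact = coact' := by
  refine TensorProduct.ext' fun m n => ?_
  obtain ⟨s, m₀, m₁, hm⟩ := TensorProduct.exists_finset_nat_sum_tmul_eq (coactM m)
  obtain ⟨t, n₀, n₁, hn⟩ := TensorProduct.exists_finset_nat_sum_tmul_eq (coactN n)
  rw [hcoact m n s t m₀ m₁ n₀ n₁ hm hn, hcoact' m n s t m₀ m₁ n₀ n₁ hm hn]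

theorem TensorActChar.comp_symm {φ : H ≃ₗ[k] H}
    (hφ : ∀ h, Coalgebra.comul (R := k) (φ h)
      = TensorProduct.map φ.toLinearMap φ.toLinearMap (Coalgebra.comul (R := k) h))
    {actM : H →ₗ[k] M →ₗ[k] M} {actN : H →ₗ[k] N →ₗ[k] N}
    {act : H →ₗ[k] (M ⊗[k] N) →ₗ[k] (M ⊗[k] N)}
    (hact : TensorActChar k H φ φ actM actN act) :
    TensorActChar k H id id actM actN (act ∘ₗ φ.symm.toLinearMap) := by
  intro h m n s p q hpq
  have hcomul : Coalgebra.comul (R := k) (φ.symm h)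
      = ∑ i ∈ s, φ.symm (p i) ⊗ₜ[k] φ.symm (q i) := by
    simp [Coalgebra.comul_symm_apply hφ, hpq]
  simpa using hact (φ.symm h) m n s (φ.symm ∘ p) (φ.symm ∘ q) hcomul

end GYD

theorem statement_3_general
    (k H : Type) [Field k] [Ring H] [HopfAlgebra k H]
    (β : H ≃ₗ[k] H)
    (hβ : GYD.IsHopfAut k H β)
    (M N : Type) [AddCommGroup M] [Module k M] [AddCommGroup N] [Module k N]
    (actM : H →ₗ[k] M →ₗ[k] M) (coactM : M →ₗ[k] M ⊗[k] H)
    (actN : H →ₗ[k] N →ₗ[k] N) (coactN : N →ₗ[k] N ⊗[k] H)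
    (act₁ : H →ₗ[k] (M ⊗[k] N) →ₗ[k] (M ⊗[k] N))
    (coact₁ : M ⊗[k] N →ₗ[k] (M ⊗[k] N) ⊗[k] H)
    (hact₁ : GYD.TensorActChar k H id id actM actN act₁)
    (hcoact₁ : GYD.TensorCoactChar k H coactM coactN coact₁)
    (actHat : H →ₗ[k] (M ⊗[k] N) →ₗ[k] (M ⊗[k] N))
    (coactHat : M ⊗[k] N →ₗ[k] (M ⊗[k] N) ⊗[k] H)
    (hactHat : GYD.TensorActChar k H ⇑β ⇑β actM actN actHat)
    (hcoactHat : GYD.TensorCoactChar k H coactM coactN coactHat) :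
    act₁ = actHat ∘ₗ β.symm.toLinearMap ∧ coact₁ = coactHat :=
  ⟨hact₁.eq (hactHat.comp_symm hβ.2.2.1), hcoact₁.eq hcoactHat⟩

theorem statement_3
    (k H : Type) [Field k] [Ring H] [HopfAlgebra k H]
    (Sinv : H → H) (hS : GYD.IsAntipodeInv k H Sinv)
    (α β γ : H ≃ₗ[k] H)
    (hα : GYD.IsHopfAut k H α) (hβ : GYD.IsHopfAut k H β) (hγ : GYD.IsHopfAut k H γ)
    (M N : Type) [AddCommGroup M] [Module k M] [AddCommGroup N] [Module k N]
    (actM : H →ₗ[k] M →ₗ[k] M) (coactM : M →ₗ[k] M ⊗[k] H)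
    (actN : H →ₗ[k] N →ₗ[k] N) (coactN : N →ₗ[k] N ⊗[k] H)
    (hM : GYD.IsYD k H Sinv ⇑α ⇑β actM coactM)
    (hN : GYD.IsYD k H Sinv ⇑β ⇑γ actN coactN)
    (act₁ : H →ₗ[k] (M ⊗[k] N) →ₗ[k] (M ⊗[k] N))
    (coact₁ : M ⊗[k] N →ₗ[k] (M ⊗[k] N) ⊗[k] H)
    (hact₁ : GYD.TensorActChar k H id id actM actN act₁)
    (hcoact₁ : GYD.TensorCoactChar k H coactM coactN coact₁)
    (actHat : H →ₗ[k] (M ⊗[k] N) →ₗ[k] (M ⊗[k] N))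
    (coactHat : M ⊗[k] N →ₗ[k] (M ⊗[k] N) ⊗[k] H)
    (hactHat : GYD.TensorActChar k H ⇑β ⇑β actM actN actHat)
    (hcoactHat : GYD.TensorCoactChar k H coactM coactN coactHat) :
    act₁ = actHat ∘ₗ β.symm.toLinearMap ∧ coact₁ = coactHat :=
  statement_3_general k H β hβ M N actM coactM actN coactN act₁ coact₁ hact₁ hcoact₁ actHat coactHat
    hactHat hcoactHat

end
end
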